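/- arXiv:2507.00436 — 9 statements merged into one kernel-verified Lean document; each statement's English description precedes it below -/
import Mathlib

section
/- For all real parameters α > 0, β > 0 and 0 < γ < 1, the set Σ_{(α,β,γ)} = {(p,q) ∈ ℕ×ℕ : p ≥ 1, q ≥ 1, q(1+αp²) = βp√(1+γαp²)} is finite. -/
/-- Natural-number roots of a nonzero real quartic `a x^4 + b x^2 + c` form a finite set. -/
lemma quartic_nat_roots_finite (a b c : ℝ) (hc : c ≠ 0) :
    {p : ℕ | a * (p : ℝ) ^ 4 + b * (p : ℝ) ^ 2 + c = 0}.Finite := by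
  have hP : (Polynomial.C a * Polynomial.X ^ 4 + Polynomial.C b * Polynomial.X ^ 2
      + Polynomial.C c) ≠ 0 := by
    intro h
    have := congrArg (fun q => Polynomial.coeff q 0) h
    simp [Polynomial.coeff_add, Polynomial.coeff_C_mul] at this
    exact hc this
  have hfin : {x : ℝ | (Polynomial.C a * Polynomial.X ^ 4 + Polynomial.C b * Polynomial.X ^ 2
      + Polynomial.C c).IsRoot x}.Finite := Polynomial.finite_setOf_isRoot hP
  have : {p : ℕ | a * (p : ℝ) ^ 4 + b * (p : ℝ) ^ 2 + c = 0} =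
      ((↑) : ℕ → ℝ) ⁻¹' {x : ℝ | (Polynomial.C a * Polynomial.X ^ 4 + Polynomial.C b *
        Polynomial.X ^ 2 + Polynomial.C c).IsRoot x} := by
    ext p
    simp [Polynomial.IsRoot, Polynomial.eval_add, Polynomial.eval_mul]
  rw [this]
  exact hfin.preimage (Nat.cast_injective.injOn)

/-- For all real parameters `α > 0`, `β > 0` and `0 < γ < 1`, the set
`Σ_{(α,β,γ)} = {(p,q) ∈ ℕ×ℕ : p ≥ 1, q ≥ 1, q(1+αp²) = βp√(1+γαp²)}` is finite. -/
theorem bona_smith_kernel_set_finite (α β γ : ℝ) (hα : 0 < α) (hβ : 0 < β)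
    (hγ0 : 0 < γ) (hγ1 : γ < 1) :
    {pq : ℕ × ℕ | 1 ≤ pq.1 ∧ 1 ≤ pq.2 ∧
      (pq.2 : ℝ) * (1 + α * (pq.1 : ℝ) ^ 2) =
        β * (pq.1 : ℝ) * Real.sqrt (1 + γ * α * (pq.1 : ℝ) ^ 2)}.Finite := by
  set Q : ℕ := ⌈β ^ 2 / α⌉₊ with hQ
  have hsub : {pq : ℕ × ℕ | 1 ≤ pq.1 ∧ 1 ≤ pq.2 ∧
      (pq.2 : ℝ) * (1 + α * (pq.1 : ℝ) ^ 2) =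
        β * (pq.1 : ℝ) * Real.sqrt (1 + γ * α * (pq.1 : ℝ) ^ 2)} ⊆
      ⋃ q ∈ Set.Icc 1 Q, (fun p => (p, q)) ''
        {p : ℕ | ((q : ℝ) ^ 2 * α ^ 2 - γ * α * β ^ 2) * (p : ℝ) ^ 4 +
          (2 * (q : ℝ) ^ 2 * α - β ^ 2) * (p : ℝ) ^ 2 + (q : ℝ) ^ 2 = 0} := by
    rintro ⟨p, q⟩ ⟨hp, hq, heq⟩
    simp only [Set.mem_setOf_eq] at heq
    set x : ℝ := (p : ℝ) with hx
    have hrad : (0 : ℝ) ≤ 1 + γ * α * x ^ 2 := by positivity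
    have hsq : (q : ℝ) ^ 2 * (1 + α * x ^ 2) ^ 2 = β ^ 2 * x ^ 2 * (1 + γ * α * x ^ 2) := by
      have := congrArg (fun t : ℝ => t ^ 2) heq
      simp only [mul_pow] at this
      rw [Real.sq_sqrt hrad] at this
      linarith [this]
    have hpos : (0 : ℝ) < (1 + α * x ^ 2) ^ 2 := by positivity
    have h3 : α * x ^ 2 * (1 + γ * α * x ^ 2) ≤ (1 + α * x ^ 2) ^ 2 := by
      nlinarith [mul_nonneg (mul_nonneg (sub_nonneg.mpr hγ1.le) (sq_nonneg α)) (sq_nonneg (x ^ 2)),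
        mul_nonneg hα.le (sq_nonneg x)]
    have h4 : β ^ 2 * (α * x ^ 2 * (1 + γ * α * x ^ 2)) ≤ β ^ 2 * (1 + α * x ^ 2) ^ 2 :=
      mul_le_mul_of_nonneg_left h3 (sq_nonneg β)
    have hsq' : α * ((q : ℝ) ^ 2 * (1 + α * x ^ 2) ^ 2) =
        α * (β ^ 2 * x ^ 2 * (1 + γ * α * x ^ 2)) := by rw [hsq]
    have h5 : (q : ℝ) ^ 2 * α * (1 + α * x ^ 2) ^ 2 ≤ β ^ 2 * (1 + α * x ^ 2) ^ 2 := by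
      nlinarith [hsq', h4]
    have hqbound : (q : ℝ) ^ 2 ≤ β ^ 2 / α :=
      (le_div_iff₀ hα).mpr (le_of_mul_le_mul_right h5 hpos)
    have hq1 : (1 : ℝ) ≤ (q : ℝ) := by exact_mod_cast hq
    have hqQ : q ≤ Q := by
      have h1 : (q : ℝ) ≤ (q : ℝ) ^ 2 := by nlinarith
      have h2 : (q : ℝ) ≤ (Q : ℝ) := le_trans (h1.trans hqbound) (Nat.le_ceil _)
      exact_mod_cast h2
    refine Set.mem_biUnion ⟨hq, hqQ⟩ ?_
    refine ⟨p, ?_, rfl⟩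
    simp only [Set.mem_setOf_eq]
    linear_combination hsq
  refine Set.Finite.subset ?_ hsub
  refine Set.Finite.biUnion (Set.finite_Icc 1 Q) fun q hq => ?_
  refine Set.Finite.image _ (quartic_nat_roots_finite _ _ _ ?_)
  have hq' : (q : ℝ) ≠ 0 := by
    have h1 : 1 ≤ q := hq.1
    exact_mod_cast Nat.one_le_iff_ne_zero.mp h1
  positivity
end

section
/- Let α > 0, β > 0 and 0 < γ < 1 be real, and suppose (p₀,q₀) ∈ Σ_{(α,β,γ)} with α²q₀² ≠ γαβ². Set L = ⌊β√(1+α)/α⌋. Assume: (i) the real number q₀²/((α²q₀² − γαβ²)p₀²) is not an integer; and (ii) for every natural number q with 1 ≤ q ≤ L and q ≠ q₀, there is no real number x that is the square of a positive integer and satisfies (α²q² − γαβ²)x² + (2αq² − β²)x + q² = 0. Then (p₀,q₀) is the only element of Σ_{(α,β,γ)}. -/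
set_option maxHeartbeats 1000000

/-- From the defining equation we get the quartic relation. -/
lemma bsk_quartic (α β γ : ℝ) (p q : ℕ)
    (hnn : (0:ℝ) ≤ 1 + γ * α * (p : ℝ) ^ 2)
    (h : (q : ℝ) * (1 + α * (p : ℝ) ^ 2) =
      β * (p : ℝ) * Real.sqrt (1 + γ * α * (p : ℝ) ^ 2)) :
    (α ^ 2 * (q : ℝ) ^ 2 - γ * α * β ^ 2) * ((p : ℝ) ^ 2) ^ 2 +
      (2 * α * (q : ℝ) ^ 2 - β ^ 2) * (p : ℝ) ^ 2 + (q : ℝ) ^ 2 = 0 := by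
  have hsq := Real.sq_sqrt hnn
  have h2 : ((q : ℝ) * (1 + α * (p : ℝ) ^ 2)) ^ 2 =
      (β * (p : ℝ) * Real.sqrt (1 + γ * α * (p : ℝ) ^ 2)) ^ 2 := by rw [h]
  linear_combination h2 + β ^ 2 * (p : ℝ) ^ 2 * hsq

/-- Uniqueness of the element of `Σ_{(α,β,γ)}` under the two non-integrality conditions. -/
theorem bona_smith_kernel_unique (α β γ : ℝ) (hα : 0 < α) (hβ : 0 < β)
    (hγ0 : 0 < γ) (hγ1 : γ < 1) (p₀ q₀ : ℕ) (hp₀ : 1 ≤ p₀) (hq₀ : 1 ≤ q₀)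
    (h₀ : (q₀ : ℝ) * (1 + α * (p₀ : ℝ) ^ 2) =
      β * (p₀ : ℝ) * Real.sqrt (1 + γ * α * (p₀ : ℝ) ^ 2))
    (hnd : α ^ 2 * (q₀ : ℝ) ^ 2 ≠ γ * α * β ^ 2)
    (hi : ¬ ∃ n : ℤ,
      (q₀ : ℝ) ^ 2 / ((α ^ 2 * (q₀ : ℝ) ^ 2 - γ * α * β ^ 2) * (p₀ : ℝ) ^ 2) = (n : ℝ))
    (hii : ∀ q : ℕ, 1 ≤ q → q ≤ ⌊β * Real.sqrt (1 + α) / α⌋₊ → q ≠ q₀ →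
      ¬ ∃ x : ℝ, (∃ m : ℕ, 0 < m ∧ x = (m : ℝ) ^ 2) ∧
        (α ^ 2 * (q : ℝ) ^ 2 - γ * α * β ^ 2) * x ^ 2 +
          (2 * α * (q : ℝ) ^ 2 - β ^ 2) * x + (q : ℝ) ^ 2 = 0) :
    ∀ p q : ℕ, 1 ≤ p → 1 ≤ q →
      (q : ℝ) * (1 + α * (p : ℝ) ^ 2) =
        β * (p : ℝ) * Real.sqrt (1 + γ * α * (p : ℝ) ^ 2) →
      (p, q) = (p₀, q₀) := by
  intro p q hp hq h
  have hpR : (0:ℝ) < (p : ℝ) := by exact_mod_cast hp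
  have hp0R : (0:ℝ) < (p₀ : ℝ) := by exact_mod_cast hp₀
  have hqR : (0:ℝ) < (q : ℝ) := by exact_mod_cast hq
  have hnn : (0:ℝ) ≤ 1 + γ * α * (p : ℝ) ^ 2 := by positivity
  have hnn₀ : (0:ℝ) ≤ 1 + γ * α * (p₀ : ℝ) ^ 2 := by positivity
  have hq4 := bsk_quartic α β γ p q hnn h
  have hq04 := bsk_quartic α β γ p₀ q₀ hnn₀ h₀
  -- bound: q ≤ floor
  have hbound : (q : ℝ) ≤ β * Real.sqrt (1 + α) / α := by
    have hsq := Real.sq_sqrt hnn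
    have h2 : ((q : ℝ) * (1 + α * (p : ℝ) ^ 2)) ^ 2 =
        (β * (p : ℝ) * Real.sqrt (1 + γ * α * (p : ℝ) ^ 2)) ^ 2 := by rw [h]
    have h1p : (0:ℝ) < 1 + α * (p : ℝ) ^ 2 := by positivity
    have hp2 : (0:ℝ) < (p : ℝ) ^ 2 := by positivity
    have e1 : (q:ℝ) ^ 2 * (1 + α * (p:ℝ) ^ 2) ^ 2 = β ^ 2 * (p:ℝ) ^ 2 * (1 + γ * α * (p:ℝ) ^ 2) := by
      linear_combination h2 + β ^ 2 * (p : ℝ) ^ 2 * hsq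
    have e2 : (q:ℝ) ^ 2 * (1 + α * (p:ℝ) ^ 2) ≤ β ^ 2 * (p:ℝ) ^ 2 := by
      have e3 : β ^ 2 * (p:ℝ) ^ 2 * (1 + γ * α * (p:ℝ) ^ 2) ≤ β ^ 2 * (p:ℝ) ^ 2 * (1 + α * (p:ℝ) ^ 2) := by
        nlinarith [mul_nonneg (mul_nonneg (mul_nonneg (sq_nonneg β) hp2.le) hα.le) hp2.le, hγ1]
      have e4 : (q:ℝ) ^ 2 * (1 + α * (p:ℝ) ^ 2) * (1 + α * (p:ℝ) ^ 2) ≤ β ^ 2 * (p:ℝ) ^ 2 * (1 + α * (p:ℝ) ^ 2) := by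
        nlinarith [e1, e3]
      exact le_of_mul_le_mul_right e4 h1p
    -- q² α ≤ β²
    have hqa : (q : ℝ) ^ 2 * α ≤ β ^ 2 := by
      have e5 : (q:ℝ) ^ 2 * α * (p:ℝ) ^ 2 ≤ β ^ 2 * (p:ℝ) ^ 2 := by nlinarith [e2, sq_nonneg (q:ℝ)]
      exact le_of_mul_le_mul_right e5 hp2
    have hs1 : Real.sqrt (1 + α) ^ 2 = 1 + α := Real.sq_sqrt (by linarith)
    have hs1n : 0 ≤ Real.sqrt (1 + α) := Real.sqrt_nonneg _
    rw [le_div_iff₀ hα]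
    have e6 : (q:ℝ) ^ 2 * α ^ 2 ≤ β ^ 2 * α := by nlinarith [hqa, hα]
    nlinarith [e6, hs1, hs1n, mul_pos hqR hα, mul_nonneg (le_of_lt hβ) hs1n]
  have hfloor : q ≤ ⌊β * Real.sqrt (1 + α) / α⌋₊ := Nat.le_floor hbound
  by_cases hqe : q = q₀
  · -- show p = p₀
    subst hqe
    have hA : α ^ 2 * (q : ℝ) ^ 2 - γ * α * β ^ 2 ≠ 0 := sub_ne_zero.mpr hnd
    by_cases hx : (p : ℝ) ^ 2 = (p₀ : ℝ) ^ 2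
    · have hpp : (p : ℝ) = (p₀ : ℝ) := by nlinarith [hx]
      have : p = p₀ := by exact_mod_cast hpp
      rw [this]
    · exfalso
      apply hi
      set A := α ^ 2 * (q : ℝ) ^ 2 - γ * α * β ^ 2 with hAdef
      set B := 2 * α * (q : ℝ) ^ 2 - β ^ 2 with hBdef
      have hd : (p : ℝ) ^ 2 - (p₀ : ℝ) ^ 2 ≠ 0 := sub_ne_zero.mpr hx
      have hsum : A * ((p : ℝ) ^ 2 + (p₀ : ℝ) ^ 2) + B = 0 := by
        have hdiff : ((p : ℝ) ^ 2 - (p₀ : ℝ) ^ 2) * (A * ((p : ℝ) ^ 2 + (p₀ : ℝ) ^ 2) + B) = 0 := by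
          linear_combination hq4 - hq04
        rcases mul_eq_zero.mp hdiff with h' | h'
        · exact absurd h' hd
        · exact h'
      have hprod : (q : ℝ) ^ 2 = A * (p : ℝ) ^ 2 * (p₀ : ℝ) ^ 2 := by
        linear_combination hq4 - (p : ℝ) ^ 2 * hsum
      refine ⟨(p : ℤ) ^ 2, ?_⟩
      rw [hprod]
      field_simp
      norm_cast
  · exfalso
    exact hii q hq hfloor hqe ⟨(p : ℝ) ^ 2, ⟨p, hp, rfl⟩, hq4⟩
end

section
/- Let α > 0, β > 0 and 0 < γ < 1 be real, and assume that αq² ≠ γβ² for every integer q. Then there exists a constant M > 0, depending only on (α,β,γ), such that for every pair (p,q) ∈ ℕ×ℤ with (p,|q|) ∉ Σ_{(α,β,γ)} and (p,q) ≠ (0,0), one has C(p,q) := (p(βp + γαβp³) + p|q|(1+αp²)) / |q²(1+αp²)² − β²p²(1+γαp²)| ≤ M and D(p,q) := (p|q|(1+αp²) + βp²) / |q²(1+αp²)² − β²p²(1+γαp²)| ≤ M. -/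
/-- the rational function whose distance to integer squares controls the denominator -/
noncomputable def bsg (α β γ : ℝ) (p : ℕ) : ℝ :=
  β ^ 2 * (p : ℝ) ^ 2 * (1 + γ * α * (p : ℝ) ^ 2) / (1 + α * (p : ℝ) ^ 2) ^ 2

lemma bsg_le {α β γ : ℝ} (hα : 0 < α) (hγ1 : γ < 1) (p : ℕ) :
    bsg α β γ p ≤ β ^ 2 / α := by
  rw [bsg, div_le_div_iff₀ (by positivity) hα]
  have hx : (0:ℝ) ≤ α * (p:ℝ)^2 := by positivity
  nlinarith [mul_nonneg (mul_nonneg (sq_nonneg β) (sub_nonneg.mpr hγ1.le)) (sq_nonneg (α*(p:ℝ)^2)),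
    mul_nonneg (sq_nonneg β) hx, mul_nonneg (sq_nonneg β) (mul_nonneg hx hx)]

lemma bsg_near {α β γ : ℝ} (hα : 0 < α) (hγ0 : 0 < γ) (hγ1 : γ < 1) (p : ℕ) (hp : 1 ≤ p) :
    |bsg α β γ p - γ * β ^ 2 / α| ≤ β ^ 2 / (α ^ 2 * p) := by
  have hA : (0:ℝ) < 1 + α * (p:ℝ)^2 := by positivity
  have hp1 : (1:ℝ) ≤ (p:ℝ) := by exact_mod_cast hp
  have hpp : (p:ℝ) ≤ (p:ℝ)^2 := by nlinarith
  have hid : bsg α β γ p - γ * β ^ 2 / α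
      = β ^ 2 * (α * (p:ℝ)^2 * (1 - 2*γ) - γ) / (α * (1 + α * (p:ℝ)^2) ^ 2) := by
    rw [bsg]
    field_simp
    ring
  rw [hid, abs_div,
    abs_of_pos (show (0:ℝ) < α * (1 + α * (p:ℝ)^2) ^ 2 from by positivity),
    div_le_div_iff₀ (by positivity) (by positivity)]
  have hnum : |β ^ 2 * (α * (p:ℝ)^2 * (1 - 2*γ) - γ)| ≤ β ^ 2 * (1 + α * (p:ℝ)^2) := by
    rw [abs_mul, abs_of_nonneg (sq_nonneg β)]
    have h2 : |α * (p:ℝ)^2 * (1 - 2*γ) - γ| ≤ 1 + α * (p:ℝ)^2 := by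
      rw [abs_le]
      constructor <;> nlinarith [mul_nonneg hα.le (sq_nonneg (p:ℝ))]
    nlinarith [sq_nonneg β, abs_nonneg (α * (p:ℝ)^2 * (1 - 2*γ) - γ)]
  have hden : α * (p:ℝ) * (1 + α * (p:ℝ)^2) ≤ (1 + α * (p:ℝ)^2)^2 := by
    nlinarith [mul_nonneg hα.le (sq_nonneg (p:ℝ))]
  calc |β ^ 2 * (α * (p:ℝ)^2 * (1 - 2*γ) - γ)| * (α ^ 2 * (p:ℝ))
      ≤ (β ^ 2 * (1 + α * (p:ℝ)^2)) * (α ^ 2 * (p:ℝ)) := by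
        apply mul_le_mul_of_nonneg_right hnum (by positivity)
    _ = (β ^ 2 * α) * (α * (p:ℝ) * (1 + α * (p:ℝ)^2)) := by ring
    _ ≤ (β ^ 2 * α) * (1 + α * (p:ℝ)^2)^2 := by
        apply mul_le_mul_of_nonneg_left hden (by positivity)
    _ = β ^ 2 * (α * (1 + α * (p:ℝ)^2) ^ 2) := by ring

/-- if `r² = g p` with `p ≥ 1` then the kernel relation holds -/
lemma bsg_kernel {α β γ : ℝ} (hα : 0 < α) (hβ : 0 < β) (hγ0 : 0 < γ) (p r : ℕ)
    (hp : 1 ≤ p) (h : (r:ℝ)^2 = bsg α β γ p) :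
    (r:ℝ) * (1 + α * (p:ℝ)^2) = β * (p:ℝ) * Real.sqrt (1 + γ * α * (p:ℝ)^2) := by
  have hA : (0:ℝ) < 1 + α * (p:ℝ)^2 := by positivity
  have hB : (0:ℝ) < 1 + γ * α * (p:ℝ)^2 := by positivity
  rw [bsg] at h
  have h1 : (r:ℝ)^2 * (1 + α * (p:ℝ)^2)^2 = β ^ 2 * (p:ℝ)^2 * (1 + γ * α * (p:ℝ)^2) := by
    rw [h]; field_simp
  have h2 : ((r:ℝ) * (1 + α * (p:ℝ)^2))^2
      = (β * (p:ℝ) * Real.sqrt (1 + γ * α * (p:ℝ)^2))^2 := by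
    rw [mul_pow, mul_pow, Real.sq_sqrt hB.le, mul_pow]
    linarith [h1]
  nlinarith [h2, sq_nonneg ((r:ℝ) * (1 + α * (p:ℝ)^2) - β * (p:ℝ) * Real.sqrt (1 + γ * α * (p:ℝ)^2)),
    sq_nonneg ((r:ℝ) * (1 + α * (p:ℝ)^2) + β * (p:ℝ) * Real.sqrt (1 + γ * α * (p:ℝ)^2)),
    mul_nonneg (Nat.cast_nonneg r) hA.le,
    mul_nonneg (mul_nonneg hβ.le (Nat.cast_nonneg p)) (Real.sqrt_nonneg (1 + γ * α * (p:ℝ)^2))]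

/-- key uniform lower bound on `|r² - g p|` in the bounded range of `r` -/
lemma bsg_delta {α β γ : ℝ} (hα : 0 < α) (hβ : 0 < β) (hγ0 : 0 < γ) (hγ1 : γ < 1)
    (hnd : ∀ q : ℤ, α * (q : ℝ) ^ 2 ≠ γ * β ^ 2) :
    ∃ δ : ℝ, 0 < δ ∧ ∀ p r : ℕ, 1 ≤ p →
      ¬ ((r:ℝ) * (1 + α * (p:ℝ)^2) = β * (p:ℝ) * Real.sqrt (1 + γ * α * (p:ℝ)^2)) →
      (r:ℝ)^2 ≤ β ^ 2 / α + 1 → δ ≤ |(r:ℝ)^2 - bsg α β γ p| := by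
  classical
  set L : ℝ := γ * β ^ 2 / α with hLdef
  have hneq : ∀ r : ℕ, (r:ℝ)^2 ≠ L := by
    intro r h
    apply hnd (r : ℤ)
    push_cast
    rw [h, hLdef, mul_div_assoc']
    exact mul_div_cancel_left₀ _ hα.ne'
  set R : ℕ := ⌈β ^ 2 / α⌉₊ + 1 with hRdef
  have hRle : ∀ r : ℕ, (r:ℝ)^2 ≤ β ^ 2 / α + 1 → r ≤ R := by
    intro r hr
    have h1 : (r:ℝ) ≤ (r:ℝ)^2 ∨ r = 0 := by
      rcases Nat.eq_zero_or_pos r with h | h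
      · exact Or.inr h
      · left; have : (1:ℝ) ≤ (r:ℝ) := by exact_mod_cast h
        nlinarith
    rcases h1 with h1 | h1
    · have : (r:ℝ) ≤ (R:ℝ) := by
        have := Nat.le_ceil (β ^ 2 / α)
        push_cast [hRdef]
        linarith
      exact_mod_cast this
    · simp [h1]
  set Sf : Finset ℝ := insert 1 ((Finset.Icc 0 R).image (fun r : ℕ => |(r:ℝ)^2 - L|)) with hSf
  have hSne : Sf.Nonempty := Finset.insert_nonempty _ _
  set ε : ℝ := Sf.min' hSne with hεdef
  have hεpos : 0 < ε := by
    have hmem : ε ∈ Sf := Sf.min'_mem hSne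
    rw [hSf] at hmem
    rcases Finset.mem_insert.mp hmem with h | h
    · rw [h]; norm_num
    · obtain ⟨r, _, hr⟩ := Finset.mem_image.mp h
      rw [← hr]
      exact abs_pos.mpr (sub_ne_zero.mpr (hneq r))
  have hεle : ∀ r : ℕ, r ≤ R → ε ≤ |(r:ℝ)^2 - L| := by
    intro r hr
    apply Finset.min'_le
    rw [hSf]
    exact Finset.mem_insert_of_mem
      (Finset.mem_image_of_mem _ (Finset.mem_Icc.mpr ⟨Nat.zero_le _, hr⟩))
  set P : ℕ := ⌈2 * β ^ 2 / (α ^ 2 * ε)⌉₊ + 1 with hPdef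
  set f : ℕ × ℕ → ℝ := fun pr =>
    if ((pr.2:ℝ) * (1 + α * (pr.1:ℝ)^2) = β * (pr.1:ℝ) * Real.sqrt (1 + γ * α * (pr.1:ℝ)^2))
    then 1 else |(pr.2:ℝ)^2 - bsg α β γ pr.1| with hfdef
  set Tf : Finset ℝ := insert 1 (((Finset.Icc 1 P) ×ˢ (Finset.Icc 0 R)).image f) with hTf
  have hTne : Tf.Nonempty := Finset.insert_nonempty _ _
  set δ₀ : ℝ := Tf.min' hTne with hδ₀def
  have hδ₀pos : 0 < δ₀ := by
    have hmem : δ₀ ∈ Tf := Tf.min'_mem hTne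
    rw [hTf] at hmem
    rcases Finset.mem_insert.mp hmem with h | h
    · rw [h]; norm_num
    · obtain ⟨pr, hprmem, hpr⟩ := Finset.mem_image.mp h
      rw [← hpr, hfdef]
      by_cases hk : ((pr.2:ℝ) * (1 + α * (pr.1:ℝ)^2)
          = β * (pr.1:ℝ) * Real.sqrt (1 + γ * α * (pr.1:ℝ)^2))
      · simp [hk]
      · simp only [hk, if_false]
        apply abs_pos.mpr
        intro hc
        exact hk (bsg_kernel hα hβ hγ0 pr.1 pr.2
          (Finset.mem_Icc.mp (Finset.mem_product.mp hprmem).1).1 (sub_eq_zero.mp hc))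
  refine ⟨min (ε/2) δ₀, lt_min (by linarith) hδ₀pos, ?_⟩
  intro p r hp hnk hrb
  have hrR : r ≤ R := hRle r hrb
  rcases le_or_gt p P with hpP | hpP
  · have hmem : f (p, r) ∈ ((Finset.Icc 1 P) ×ˢ (Finset.Icc 0 R)).image f :=
      Finset.mem_image_of_mem _ (Finset.mem_product.mpr
        ⟨Finset.mem_Icc.mpr ⟨hp, hpP⟩, Finset.mem_Icc.mpr ⟨Nat.zero_le _, hrR⟩⟩)
    have h1 : δ₀ ≤ f (p, r) :=
      Finset.min'_le _ _ (by rw [hTf]; exact Finset.mem_insert_of_mem hmem)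
    rw [hfdef] at h1
    simp only [hnk, if_false] at h1
    exact le_trans (min_le_right _ _) h1
  · have hPc : 2 * β ^ 2 / (α ^ 2 * ε) ≤ (p:ℝ) := by
      have h1 := Nat.le_ceil (2 * β ^ 2 / (α ^ 2 * ε))
      have h2 : (P:ℝ) ≤ (p:ℝ) := by exact_mod_cast hpP.le
      have h3 : ((⌈2 * β ^ 2 / (α ^ 2 * ε)⌉₊ : ℕ) : ℝ) + 1 = (P:ℝ) := by
        rw [hPdef]; push_cast; ring
      linarith
    have hp0' : (0:ℝ) < (p:ℝ) := by exact_mod_cast hp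
    have hnear : |bsg α β γ p - L| ≤ ε / 2 := by
      have h1 := bsg_near (β := β) hα hγ0 hγ1 p hp
      have h2 : β ^ 2 / (α ^ 2 * (p:ℝ)) ≤ ε / 2 := by
        rw [div_le_div_iff₀ (by positivity) (by norm_num)]
        rw [div_le_iff₀ (by positivity)] at hPc
        linarith
      exact le_trans h1 h2
    have htri : ε ≤ |(r:ℝ)^2 - bsg α β γ p| + |bsg α β γ p - L| :=
      le_trans (hεle r hrR) (abs_sub_le _ _ _)
    have : ε / 2 ≤ |(r:ℝ)^2 - bsg α β γ p| := by linarith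
    exact le_trans (min_le_left _ _) this
set_option maxHeartbeats 1000000

/-- Uniform bound for the quantities `C(p,q)` and `D(p,q)` controlling the
pseudo-inverse of the linearized Bona-Smith operator, away from the kernel set. -/
theorem bona_smith_CD_bound (α β γ : ℝ) (hα : 0 < α) (hβ : 0 < β)
    (hγ0 : 0 < γ) (hγ1 : γ < 1)
    (hnd : ∀ q : ℤ, α * (q : ℝ) ^ 2 ≠ γ * β ^ 2) :
    ∃ M : ℝ, 0 < M ∧ ∀ p : ℕ, ∀ q : ℤ,
      ¬ (1 ≤ p ∧ 1 ≤ q.natAbs ∧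
          ((q.natAbs : ℝ)) * (1 + α * (p : ℝ) ^ 2) =
            β * (p : ℝ) * Real.sqrt (1 + γ * α * (p : ℝ) ^ 2)) →
      (p, q) ≠ (0, 0) →
      ((p : ℝ) * (β * p + γ * α * β * (p : ℝ) ^ 3) +
          (p : ℝ) * |(q : ℝ)| * (1 + α * (p : ℝ) ^ 2)) /
        |(q : ℝ) ^ 2 * (1 + α * (p : ℝ) ^ 2) ^ 2 -
          β ^ 2 * (p : ℝ) ^ 2 * (1 + γ * α * (p : ℝ) ^ 2)| ≤ M ∧
      ((p : ℝ) * |(q : ℝ)| * (1 + α * (p : ℝ) ^ 2) + β * (p : ℝ) ^ 2) /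
        |(q : ℝ) ^ 2 * (1 + α * (p : ℝ) ^ 2) ^ 2 -
          β ^ 2 * (p : ℝ) ^ 2 * (1 + γ * α * (p : ℝ) ^ 2)| ≤ M := by
  obtain ⟨δ, hδpos, hδ⟩ := bsg_delta hα hβ hγ0 hγ1 hnd
  set G : ℝ := β ^ 2 / α with hGdef
  have hG0 : 0 < G := by rw [hGdef]; positivity
  set M₁ : ℝ := (β + G + 1) / (α * δ) with hM1
  set M₂ : ℝ := (β + 1) * (G + 1) / α with hM2
  have hM1pos : 0 < M₁ := by
    rw [hM1]
    exact div_pos (by linarith) (mul_pos hα hδpos)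
  have hM2pos : 0 < M₂ := by rw [hM2]; positivity
  set Mx : ℝ := max (1 / β) (max M₁ M₂) with hMx
  have hMxpos : 0 < Mx := lt_of_lt_of_le (by positivity) (le_max_left _ _)
  clear_value G M₁ M₂
  refine ⟨Mx, hMxpos, ?_⟩
  intro p q hnk hne
  set r : ℕ := q.natAbs with hrdef
  have hq : ((r : ℕ) : ℝ) = |(q : ℝ)| := by simp [hrdef, Nat.cast_natAbs]
  have hq2 : (q : ℝ) ^ 2 = (r : ℝ) ^ 2 := by rw [hq]; exact (sq_abs _).symm
  set A : ℝ := 1 + α * (p : ℝ) ^ 2 with hAdef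
  set B : ℝ := 1 + γ * α * (p : ℝ) ^ 2 with hBdef
  clear_value r
  have hApos : 0 < A := by rw [hAdef]; positivity
  have hBpos : 0 < B := by rw [hBdef]; positivity
  clear_value A B
  have hp2A : α * (p : ℝ) ^ 2 ≤ A := by rw [hAdef]; norm_num
  have hB1 : (1:ℝ) ≤ B := by rw [hBdef]; nlinarith [mul_nonneg (mul_nonneg hγ0.le hα.le) (sq_nonneg (p:ℝ))]
  have hBA : B ≤ A := by
    rw [hAdef, hBdef]
    nlinarith [mul_nonneg hα.le (sq_nonneg (p:ℝ)), hγ1.le]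
  have key : 0 < |(q : ℝ) ^ 2 * A ^ 2 - β ^ 2 * (p : ℝ) ^ 2 * B| ∧
      β * (p : ℝ) ^ 2 * B + (p : ℝ) * (r : ℝ) * A ≤
        Mx * |(q : ℝ) ^ 2 * A ^ 2 - β ^ 2 * (p : ℝ) ^ 2 * B| := by
    rcases Nat.eq_zero_or_pos p with hp0 | hp1
    · -- p = 0
      have hq0 : q ≠ 0 := by rintro rfl; exact hne (by rw [hp0])
      have hq0' : (q : ℝ) ≠ 0 := Int.cast_ne_zero.mpr hq0
      have hpR : (p : ℝ) = 0 := by rw [hp0]; norm_num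
      have hqsq : (0:ℝ) < (q : ℝ) ^ 2 :=
        lt_of_le_of_ne (sq_nonneg _) (Ne.symm (pow_ne_zero 2 hq0'))
      have hΔeq : |(q : ℝ) ^ 2 * A ^ 2 - β ^ 2 * (p : ℝ) ^ 2 * B|
          = (q : ℝ) ^ 2 * A ^ 2 := by
        rw [hpR, show (q : ℝ) ^ 2 * A ^ 2 - β ^ 2 * (0:ℝ) ^ 2 * B
          = (q : ℝ) ^ 2 * A ^ 2 by ring,
          abs_of_pos (mul_pos hqsq (pow_pos hApos 2))]
      constructor
      · rw [hΔeq]; exact mul_pos hqsq (pow_pos hApos 2)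
      · rw [hΔeq, hpR]
        have h0 : (0:ℝ) ≤ Mx * ((q : ℝ) ^ 2 * A ^ 2) :=
          mul_nonneg hMxpos.le (mul_pos hqsq (pow_pos hApos 2)).le
        nlinarith [h0]
    · have hp1' : (1:ℝ) ≤ (p : ℝ) := by exact_mod_cast hp1
      have hpp : (p : ℝ) ≤ (p : ℝ) ^ 2 := by nlinarith
      rcases Nat.eq_zero_or_pos r with hr0 | hr1
      · -- q = 0
        have hqz : (q : ℝ) = 0 := by
          have : q = 0 := Int.natAbs_eq_zero.mp (by rw [← hrdef]; exact hr0)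
          rw [this]; norm_num
        have hrz : ((r : ℕ) : ℝ) = 0 := by rw [hr0]; norm_num
        have hΔeq : |(q : ℝ) ^ 2 * A ^ 2 - β ^ 2 * (p : ℝ) ^ 2 * B|
            = β ^ 2 * (p : ℝ) ^ 2 * B := by
          rw [hqz]
          rw [show (0:ℝ) ^ 2 * A ^ 2 - β ^ 2 * (p : ℝ) ^ 2 * B
            = -(β ^ 2 * (p : ℝ) ^ 2 * B) by ring, abs_neg,
            abs_of_pos (by positivity)]
        constructor
        · rw [hΔeq]; positivity
        · rw [hΔeq, hrz]
          have h1 : β * (p : ℝ) ^ 2 * B + (p : ℝ) * 0 * A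
              = (1 / β) * (β ^ 2 * (p : ℝ) ^ 2 * B) := by
            field_simp; ring
          rw [h1]
          have h2 : (1 / β) ≤ Mx := le_max_left _ _
          have h3 : (0:ℝ) ≤ β ^ 2 * (p : ℝ) ^ 2 * B := by positivity
          exact mul_le_mul_of_nonneg_right h2 h3
      · -- main case : p ≥ 1, r ≥ 1
        have hr1' : (1:ℝ) ≤ (r : ℝ) := by exact_mod_cast hr1
        have hrr : (r : ℝ) ≤ (r : ℝ) ^ 2 := by nlinarith
        have hker : ¬ ((r : ℝ) * (1 + α * (p : ℝ) ^ 2)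
            = β * (p : ℝ) * Real.sqrt (1 + γ * α * (p : ℝ) ^ 2)) := by
          intro h
          exact hnk ⟨hp1, hr1, by rw [hAdef, hBdef]; exact h⟩
        have hgne : (r : ℝ) ^ 2 ≠ bsg α β γ p := by
          intro h
          exact hker (bsg_kernel hα hβ hγ0 p r hp1 h)
        have hΔid : (q : ℝ) ^ 2 * A ^ 2 - β ^ 2 * (p : ℝ) ^ 2 * B
            = A ^ 2 * ((r : ℝ) ^ 2 - bsg α β γ p) := by
          rw [hq2, hAdef, hBdef, bsg]
          field_simp
        have hΔabs : |(q : ℝ) ^ 2 * A ^ 2 - β ^ 2 * (p : ℝ) ^ 2 * B|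
            = A ^ 2 * |(r : ℝ) ^ 2 - bsg α β γ p| := by
          rw [hΔid, abs_mul, abs_of_pos (pow_pos hApos 2)]
        have habs_pos : 0 < |(r : ℝ) ^ 2 - bsg α β γ p| :=
          abs_pos.mpr (sub_ne_zero.mpr hgne)
        have hΔpos : 0 < |(q : ℝ) ^ 2 * A ^ 2 - β ^ 2 * (p : ℝ) ^ 2 * B| := by
          rw [hΔabs]; positivity
        refine ⟨hΔpos, ?_⟩
        have hg0 : 0 ≤ bsg α β γ p := by rw [bsg]; positivity
        have hgG : bsg α β γ p ≤ G := by rw [hGdef]; exact bsg_le hα hγ1 p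
        rcases le_or_gt ((r : ℝ) ^ 2) (G + 1) with hsm | hbg
        · -- small r
          have hlow : δ ≤ |(r : ℝ) ^ 2 - bsg α β γ p| := hδ p r hp1 hker (by rw [hGdef] at hsm ⊢; exact hsm)
          have h1 : δ * A ^ 2 ≤ |(q : ℝ) ^ 2 * A ^ 2 - β ^ 2 * (p : ℝ) ^ 2 * B| := by
            rw [hΔabs]
            calc δ * A ^ 2 ≤ |(r : ℝ) ^ 2 - bsg α β γ p| * A ^ 2 :=
                  mul_le_mul_of_nonneg_right hlow (by positivity)
              _ = A ^ 2 * |(r : ℝ) ^ 2 - bsg α β γ p| := by ring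
          have hrG : (r : ℝ) ≤ G + 1 := le_trans hrr hsm
          have h2 : β * (p : ℝ) ^ 2 * B + (p : ℝ) * (r : ℝ) * A
              ≤ ((β + G + 1) / α) * A ^ 2 := by
            rw [div_mul_eq_mul_div, le_div_iff₀ hα]
            have e1 : α * (p : ℝ) ^ 2 * B ≤ A * A :=
              mul_le_mul hp2A hBA hBpos.le hApos.le
            have e2 : α * (p : ℝ) * (r : ℝ) ≤ A * (G + 1) := by
              have hpA : α * (p : ℝ) ≤ A := by nlinarith [hp2A]
              exact mul_le_mul hpA hrG (by positivity) hApos.le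
            nlinarith [mul_le_mul_of_nonneg_right e2 hApos.le, hβ.le, hApos.le,
              mul_le_mul_of_nonneg_left e1 hβ.le]
          have h3 : ((β + G + 1) / α) * A ^ 2 = M₁ * (δ * A ^ 2) := by
            rw [hM1, div_mul_eq_mul_div, div_mul_eq_mul_div,
              div_eq_div_iff hα.ne' (mul_pos hα hδpos).ne']
            ring
          calc β * (p : ℝ) ^ 2 * B + (p : ℝ) * (r : ℝ) * A
              ≤ M₁ * (δ * A ^ 2) := by rw [← h3]; exact h2
            _ ≤ M₁ * |(q : ℝ) ^ 2 * A ^ 2 - β ^ 2 * (p : ℝ) ^ 2 * B| :=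
                mul_le_mul_of_nonneg_left h1 hM1pos.le
            _ ≤ Mx * |(q : ℝ) ^ 2 * A ^ 2 - β ^ 2 * (p : ℝ) ^ 2 * B| :=
                mul_le_mul_of_nonneg_right
                  (le_trans (le_max_left M₁ M₂) (le_max_right _ _)) hΔpos.le
        · -- big r
          have hsub : (r : ℝ) ^ 2 / (G + 1) ≤ |(r : ℝ) ^ 2 - bsg α β γ p| := by
            rw [abs_of_pos (by linarith [hgG] : (0:ℝ) < (r : ℝ) ^ 2 - bsg α β γ p),
              div_le_iff₀ (by linarith : (0:ℝ) < G + 1)]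
            nlinarith [hgG, hg0, hG0]
          have h1 : A ^ 2 * ((r : ℝ) ^ 2 / (G + 1))
              ≤ |(q : ℝ) ^ 2 * A ^ 2 - β ^ 2 * (p : ℝ) ^ 2 * B| := by
            rw [hΔabs]
            exact mul_le_mul_of_nonneg_left hsub (by positivity)
          have h2 : β * (p : ℝ) ^ 2 * B + (p : ℝ) * (r : ℝ) * A
              ≤ ((β + 1) * (r : ℝ) / α) * A ^ 2 := by
            rw [div_mul_eq_mul_div, le_div_iff₀ hα]
            have e1 : β * (α * (p : ℝ) ^ 2 * B) ≤ β * (A * A) :=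
              mul_le_mul_of_nonneg_left
                (mul_le_mul hp2A hBA hBpos.le hApos.le) hβ.le
            have e1b : β * (A * A) ≤ (r : ℝ) * (β * (A * A)) :=
              le_mul_of_one_le_left (by positivity) hr1'
            have hpA : α * (p : ℝ) ≤ A := by nlinarith [hp2A]
            have e2 : α * (p : ℝ) * ((r : ℝ) * A) ≤ A * ((r : ℝ) * A) :=
              mul_le_mul_of_nonneg_right hpA (by positivity)
            nlinarith [e1, e1b, e2]
          have h3 : ((β + 1) * (r : ℝ) / α) * A ^ 2
              ≤ M₂ * (A ^ 2 * ((r : ℝ) ^ 2 / (G + 1))) := by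
            have h4 : M₂ * (A ^ 2 * ((r : ℝ) ^ 2 / (G + 1)))
                = ((β + 1) / α) * A ^ 2 * (r : ℝ) ^ 2 := by
              rw [hM2]
              field_simp [hα.ne', (by linarith : (0:ℝ) < G + 1).ne']
            rw [h4]
            have h5 : (β + 1) * (r : ℝ) / α ≤ (β + 1) * (r : ℝ) ^ 2 / α := by
              exact (div_le_div_iff_of_pos_right hα).mpr
                (mul_le_mul_of_nonneg_left hrr (by linarith))
            calc ((β + 1) * (r : ℝ) / α) * A ^ 2
                ≤ ((β + 1) * (r : ℝ) ^ 2 / α) * A ^ 2 :=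
                  mul_le_mul_of_nonneg_right h5 (by positivity)
              _ = ((β + 1) / α) * A ^ 2 * (r : ℝ) ^ 2 := by ring
          calc β * (p : ℝ) ^ 2 * B + (p : ℝ) * (r : ℝ) * A
              ≤ M₂ * (A ^ 2 * ((r : ℝ) ^ 2 / (G + 1))) := le_trans h2 h3
            _ ≤ M₂ * |(q : ℝ) ^ 2 * A ^ 2 - β ^ 2 * (p : ℝ) ^ 2 * B| :=
                mul_le_mul_of_nonneg_left h1 hM2pos.le
            _ ≤ Mx * |(q : ℝ) ^ 2 * A ^ 2 - β ^ 2 * (p : ℝ) ^ 2 * B| :=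
                mul_le_mul_of_nonneg_right
                  (le_trans (le_max_right M₁ M₂) (le_max_right _ _)) hΔpos.le
  obtain ⟨hΔpos, hNC⟩ := key
  have hnum_eq : (p : ℝ) * (β * p + γ * α * β * (p : ℝ) ^ 3) + (p : ℝ) * |(q : ℝ)| * A
      = β * (p : ℝ) ^ 2 * B + (p : ℝ) * (r : ℝ) * A := by
    rw [← hq, hBdef]
    ring
  constructor
  · rw [hnum_eq, div_le_iff₀ hΔpos]
    exact hNC
  · rw [div_le_iff₀ hΔpos]
    have hle : (p : ℝ) * |(q : ℝ)| * A + β * (p : ℝ) ^ 2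
        ≤ β * (p : ℝ) ^ 2 * B + (p : ℝ) * (r : ℝ) * A := by
      rw [← hq, hBdef]
      nlinarith [mul_nonneg (mul_nonneg hγ0.le hα.le) (sq_nonneg (p : ℝ)),
        mul_nonneg hβ.le (sq_nonneg (p : ℝ))]
    exact le_trans hle hNC
end

section
/- Let α > 0, β > 0 and 0 < γ < 1 be real. For every p ∈ ℕ and q ∈ ℤ with |q| ≥ 2β/√α, one has C(p,q) := (p(βp + γαβp³) + p|q|(1+αp²)) / |q²(1+αp²)² − β²p²(1+γαp²)| ≤ 1/(2β). -/
/-- For `|q| ≥ 2β/√α`, the quantity `C(p,q)` is bounded by `1/(2β)`. -/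
theorem bona_smith_C_bound_large_q (α β γ : ℝ) (hα : 0 < α) (hβ : 0 < β)
    (hγ0 : 0 < γ) (hγ1 : γ < 1) (p : ℕ) (q : ℤ)
    (hq : 2 * β / Real.sqrt α ≤ |(q : ℝ)|) :
    ((p : ℝ) * (β * p + γ * α * β * (p : ℝ) ^ 3) +
        (p : ℝ) * |(q : ℝ)| * (1 + α * (p : ℝ) ^ 2)) /
      |(q : ℝ) ^ 2 * (1 + α * (p : ℝ) ^ 2) ^ 2 -
        β ^ 2 * (p : ℝ) ^ 2 * (1 + γ * α * (p : ℝ) ^ 2)| ≤ 1 / (2 * β) := by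
  set P : ℝ := (p : ℝ) with hPdef
  set Q : ℝ := |(q : ℝ)| with hQdef
  have hP : 0 ≤ P := Nat.cast_nonneg p
  have hQ0 : 0 ≤ Q := abs_nonneg _
  have ha : 0 < Real.sqrt α := Real.sqrt_pos.2 hα
  have haa : Real.sqrt α ^ 2 = α := Real.sq_sqrt hα.le
  set a : ℝ := Real.sqrt α with hadef
  have hQa : 2 * β ≤ Q * a := by
    rw [div_le_iff₀ ha] at hq; linarith
  have hqq : (q : ℝ) ^ 2 = Q ^ 2 := (sq_abs _).symm
  set N : ℝ := P * (β * P + γ * α * β * P ^ 3) + P * Q * (1 + α * P ^ 2) with hNdef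
  set Δ : ℝ := Q ^ 2 * (1 + α * P ^ 2) ^ 2 - β ^ 2 * P ^ 2 * (1 + γ * α * P ^ 2)
    with hΔdef
  rw [hqq, ← hΔdef]
  clear_value P Q a N Δ
  have hN : 0 ≤ N := by
    have : 0 ≤ 1 + α * P ^ 2 := by positivity
    have h1 : 0 ≤ P * (β * P + γ * α * β * P ^ 3) := by positivity
    have h2 : 0 ≤ P * Q * (1 + α * P ^ 2) := by positivity
    linarith
  have key : 2 * β * N ≤ Δ := by
    have h1 : 0 ≤ β ^ 2 * (a * P - 2) ^ 2 * (a ^ 2 * P ^ 2 + 1) := by positivity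
    have h2 : 0 ≤ 3 * β ^ 2 * (1 - γ) * (a ^ 2) ^ 2 * P ^ 4 := by
      have : 0 ≤ 1 - γ := by linarith
      positivity
    have h3 : 0 ≤ (Q * a - 2 * β) * ((1 + a ^ 2 * P ^ 2) *
        ((Q * a + 2 * β) * (1 + a ^ 2 * P ^ 2) - 2 * β * a * P)) := by
      apply mul_nonneg (by linarith)
      apply mul_nonneg (by positivity)
      have h4 : 4 * β ≤ Q * a + 2 * β := by linarith
      have hpos : (0:ℝ) < 1 + a ^ 2 * P ^ 2 := by positivity
      have h5 : 2 * β * (2 + 2 * a ^ 2 * P ^ 2 - a * P) ≤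
          (Q * a + 2 * β) * (1 + a ^ 2 * P ^ 2) - 2 * β * a * P := by
        nlinarith [mul_le_mul_of_nonneg_right h4 hpos.le]
      have h6 : 0 < 2 + 2 * a ^ 2 * P ^ 2 - a * P := by
        nlinarith [sq_nonneg (a * P - 1)]
      nlinarith
    have hαa : α = a ^ 2 := haa.symm
    have hid : a ^ 2 * (Δ - 2 * β * N) =
        β ^ 2 * (a * P - 2) ^ 2 * (a ^ 2 * P ^ 2 + 1) +
        3 * β ^ 2 * (1 - γ) * (a ^ 2) ^ 2 * P ^ 4 +
        (Q * a - 2 * β) * ((1 + a ^ 2 * P ^ 2) *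
          ((Q * a + 2 * β) * (1 + a ^ 2 * P ^ 2) - 2 * β * a * P)) := by
      rw [hNdef, hΔdef, hαa]; ring
    have ha2 : 0 < a ^ 2 := by positivity
    have h0 : a ^ 2 * 0 ≤ a ^ 2 * (Δ - 2 * β * N) := by
      rw [mul_zero, hid]; linarith
    have := le_of_mul_le_mul_left h0 ha2
    linarith
  have hΔ0 : 0 ≤ Δ := by
    have : 0 ≤ 2 * β * N := mul_nonneg (by linarith) hN
    linarith
  rcases eq_or_lt_of_le hΔ0 with h | h
  · rw [← h, abs_zero, div_zero]
    positivity
  · rw [abs_of_pos h, div_le_div_iff₀ h (by positivity)]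
    linarith
end

section
/- Let α > 0, β > 0 and 0 < γ < 1 be real, and assume that αq² ≠ γβ² for every integer q. Then there exists a constant M > 0, depending only on (α,β,γ), such that for every pair (p,q) ∈ ℕ×ℤ with (p,|q|) ∉ Σ_{(α,β,γ)} and (p,q) ≠ (0,0), and for all f, g ∈ ℂ, the complex numbers η = −Δ(p,q)⁻¹ p (i q (1+αp²) f + βp g) and u = −Δ(p,q)⁻¹ p ((βp + γαβp³) f − i q (1+αp²) g) satisfy |η| + |u| ≤ M(|f| + |g|). -/
open Complex

/-- distance of a non-integer real to the integers is positive (uniformly). -/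
lemma int_dist_aux (c : ℝ) (hc : ∀ m : ℤ, (m : ℝ) ≠ c) :
    ∃ δ : ℝ, 0 < δ ∧ ∀ n : ℤ, δ ≤ |(n : ℝ) - c| := by
  refine ⟨min |(round c : ℝ) - c| (1/2), ?_, ?_⟩
  · apply lt_min
    · exact _root_.abs_pos.mpr (sub_ne_zero.mpr (hc (round c)))
    · norm_num
  · intro n
    rcases eq_or_ne n (round c) with h | h
    · subst h; exact min_le_left _ _
    · refine le_trans (min_le_right _ _) ?_
      have h1 : (1:ℝ) ≤ |(n:ℝ) - (round c : ℝ)| := by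
        rw [← Int.cast_sub, ← Int.cast_abs]
        exact_mod_cast Int.one_le_abs (sub_ne_zero.mpr h)
      have h2 : |c - (round c:ℝ)| ≤ 1/2 := abs_sub_round c
      have h3 := _root_.abs_sub_abs_le_abs_sub ((n:ℝ) - round c) (c - (round c:ℝ))
      have h4 : ((n:ℝ) - round c) - (c - (round c:ℝ)) = (n:ℝ) - c := by ring
      rw [h4] at h3
      linarith


/-- approximation of the rescaled dispersion ratio by its limit. -/
lemma bs_approx_aux (α β γ : ℝ) (hα : 0 < α) (hβ : 0 < β) (hγ0 : 0 < γ) (hγ1 : γ < 1)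
    (x : ℝ) (hx : 1 ≤ x) :
    |β * x * Real.sqrt (1 + γ * α * x ^ 2) / (1 + α * x ^ 2) - β * Real.sqrt (γ / α)|
      ≤ β ^ 2 / (α * (β * Real.sqrt (γ / α))) / (1 + α * x ^ 2) := by
  set X := 1 + α * x ^ 2 with hXdef
  have hX : 0 < X := by positivity
  have hY : 0 < 1 + γ * α * x ^ 2 := by positivity
  set sY := Real.sqrt (1 + γ * α * x ^ 2) with hsYdef
  have hsY2 : sY ^ 2 = 1 + γ * α * x ^ 2 := Real.sq_sqrt (le_of_lt hY)
  have hsY0 : 0 < sY := Real.sqrt_pos.mpr hY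
  set c := β * Real.sqrt (γ / α) with hcdef
  have hc2 : c ^ 2 = γ * β ^ 2 / α := by
    rw [hcdef, mul_pow, Real.sq_sqrt (by positivity : (0:ℝ) ≤ γ / α)]; ring
  have hc0 : 0 < c := by
    rw [hcdef]; positivity
  set a := β * x * sY / X with hadef
  have ha0 : 0 ≤ a := by positivity
  have ha2 : a ^ 2 = β ^ 2 * x ^ 2 * (1 + γ * α * x ^ 2) / X ^ 2 := by
    rw [hadef, div_pow, mul_pow, mul_pow, hsY2]
  have e : a ^ 2 - c ^ 2 = -(β ^ 2 * (γ + (2 * γ - 1) * α * x ^ 2)) / (α * X ^ 2) := by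
    rw [ha2, hc2, hXdef]
    field_simp
    ring
  have hb : |γ + (2 * γ - 1) * α * x ^ 2| ≤ X := by
    rw [_root_.abs_le]
    have hax : 0 ≤ α * x ^ 2 := by positivity
    constructor <;> nlinarith
  have hdiff : |a ^ 2 - c ^ 2| ≤ β ^ 2 / (α * X) := by
    rw [e, _root_.abs_div, _root_.abs_neg, _root_.abs_mul]
    rw [_root_.abs_of_pos (by positivity : (0:ℝ) < α * X ^ 2), _root_.abs_of_nonneg (by positivity : (0:ℝ) ≤ β ^ 2)]
    rw [div_le_div_iff₀ (by positivity) (by positivity)]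
    calc β ^ 2 * |γ + (2 * γ - 1) * α * x ^ 2| * (α * X)
        ≤ β ^ 2 * X * (α * X) := by
          have := mul_le_mul_of_nonneg_left hb (by positivity : (0:ℝ) ≤ β ^ 2)
          nlinarith [mul_pos hα hX]
      _ = β ^ 2 * (α * X ^ 2) := by ring
  have hfac : |a - c| * (a + c) = |a ^ 2 - c ^ 2| := by
    rw [← _root_.abs_of_nonneg (by positivity : (0:ℝ) ≤ a + c), ← _root_.abs_mul]
    ring_nf
  have hac : c ≤ a + c := by linarith
  have h1 : |a - c| * c ≤ β ^ 2 / (α * X) := by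
    calc |a - c| * c ≤ |a - c| * (a + c) := by
          exact mul_le_mul_of_nonneg_left hac (_root_.abs_nonneg _)
      _ = |a ^ 2 - c ^ 2| := hfac
      _ ≤ β ^ 2 / (α * X) := hdiff
  have : |a - c| ≤ β ^ 2 / (α * X) / c := by
    rw [le_div_iff₀ hc0]; exact h1
  calc |a - c| ≤ β ^ 2 / (α * X) / c := this
    _ = β ^ 2 / (α * c) / X := by field_simp

lemma fin_min_aux (P N : ℕ) (h : ℕ × ℕ → ℝ) :
    ∃ m : ℝ, 0 < m ∧ ∀ pr : ℕ × ℕ, pr ∈ Finset.Icc 1 P ×ˢ Finset.Icc 1 N →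
      h pr ≠ 0 → m ≤ |h pr| := by
  by_cases hne : (Finset.Icc 1 P ×ˢ Finset.Icc 1 N : Finset (ℕ × ℕ)).Nonempty
  · refine ⟨(Finset.Icc 1 P ×ˢ Finset.Icc 1 N).inf' hne
      (fun pr => if h pr = 0 then 1 else |h pr|), ?_, ?_⟩
    · rw [Finset.lt_inf'_iff]
      intro b _
      split
      · norm_num
      · exact _root_.abs_pos.mpr ‹_›
    · intro pr hmem hpr
      have := Finset.inf'_le (fun pr => if h pr = 0 then 1 else |h pr|) hmem
      rwa [if_neg hpr] at this
  · exact ⟨1, one_pos, fun pr hmem _ => absurd ⟨pr, hmem⟩ hne⟩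

lemma bs_key_aux (α β γ : ℝ) (hα : 0 < α) (hβ : 0 < β) (hγ0 : 0 < γ) (hγ1 : γ < 1)
    (hnd : ∀ q : ℤ, α * (q : ℝ) ^ 2 ≠ γ * β ^ 2) :
    ∃ c₂ : ℝ, 0 < c₂ ∧ ∀ p n : ℕ, 1 ≤ p → 1 ≤ n →
      (n : ℝ) * (1 + α * (p : ℝ) ^ 2) ≠ β * (p : ℝ) * Real.sqrt (1 + γ * α * (p : ℝ) ^ 2) →
      c₂ * (p : ℝ) ^ 2 ≤
        |(n : ℝ) * (1 + α * (p : ℝ) ^ 2) - β * (p : ℝ) * Real.sqrt (1 + γ * α * (p : ℝ) ^ 2)| := by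
  set c := β * Real.sqrt (γ / α) with hcdef
  have hc0 : 0 < c := by rw [hcdef]; positivity
  have hc2 : c ^ 2 = γ * β ^ 2 / α := by
    rw [hcdef, mul_pow, Real.sq_sqrt (by positivity : (0:ℝ) ≤ γ / α)]; ring
  have hcZ : ∀ m : ℤ, (m : ℝ) ≠ c := by
    intro m hm
    apply hnd m
    rw [hm, hc2]
    field_simp
  obtain ⟨δ, hδ0, hδ⟩ := int_dist_aux c hcZ
  set K := β ^ 2 / (α * c) with hKdef
  have hK0 : 0 < K := by rw [hKdef]; positivity
  clear_value c K
  obtain ⟨m, hm0, hmle⟩ := fin_min_aux (Nat.ceil (2 * K / (δ * α))) (Nat.ceil (c + K + 1))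
    (fun pr => (pr.2 : ℝ) * (1 + α * (pr.1 : ℝ) ^ 2)
      - β * (pr.1 : ℝ) * Real.sqrt (1 + γ * α * (pr.1 : ℝ) ^ 2))
  refine ⟨min (δ * α / 2) (min (δ * α / (2 * K)) (m * (δ * α) / (2 * K))), ?_, ?_⟩
  · exact lt_min (by positivity) (lt_min (by positivity) (by positivity))
  intro p n hp hn hs
  have hx : (1:ℝ) ≤ (p:ℝ) := by exact_mod_cast hp
  have hn1 : (1:ℝ) ≤ (n:ℝ) := by exact_mod_cast hn
  set x := (p : ℝ) with hxdef
  set X := 1 + α * x ^ 2 with hXdef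
  have hX : 0 < X := by positivity
  have hX1 : 1 ≤ X := by nlinarith
  set sY := Real.sqrt (1 + γ * α * x ^ 2) with hsYdef
  set a := β * x * sY / X with hadef
  have hac : |a - c| ≤ K / X := by
    have h := bs_approx_aux α β γ hα hβ hγ0 hγ1 x hx
    rw [← hsYdef, ← hXdef, ← hcdef] at h
    calc |a - c| ≤ β ^ 2 / (α * c) / X := h
      _ = K / X := by rw [hKdef]
  have hsX : (n : ℝ) * X - β * x * sY = X * ((n : ℝ) - a) := by
    rw [hadef]; field_simp
  have hs' : (n : ℝ) * X - β * x * sY ≠ 0 := sub_ne_zero.mpr hs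
  have hx2 : x ≤ x ^ 2 := by nlinarith
  clear_value x X sY a
  by_cases hbig : 2 * K / δ ≤ X
  · -- large p regime: distance to integers
    have hKX : K / X ≤ δ / 2 := by
      rw [div_le_div_iff₀ hX (by norm_num : (0:ℝ) < 2)]
      rw [div_le_iff₀ hδ0] at hbig
      nlinarith
    have hnc : δ ≤ |(n : ℝ) - c| := by
      have h := hδ (n : ℤ)
      rwa [Int.cast_natCast] at h
    have htri : |(n : ℝ) - c| ≤ |(n : ℝ) - a| + |a - c| := _root_.abs_sub_le _ a _
    have hna : δ / 2 ≤ |(n : ℝ) - a| := by linarith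
    calc min (δ * α / 2) (min (δ * α / (2 * K)) (m * (δ * α) / (2 * K))) * x ^ 2
        ≤ δ * α / 2 * x ^ 2 :=
          mul_le_mul_of_nonneg_right (min_le_left _ _) (by positivity)
      _ ≤ X * (δ / 2) := by rw [hXdef]; nlinarith
      _ ≤ X * |(n : ℝ) - a| := mul_le_mul_of_nonneg_left hna (le_of_lt hX)
      _ = |(n : ℝ) * X - β * x * sY| := by
          rw [hsX, _root_.abs_mul, _root_.abs_of_pos hX]
  · push_neg at hbig
    have hx2K : x ^ 2 ≤ 2 * K / (δ * α) := by
      rw [le_div_iff₀ (by positivity)]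
      rw [hXdef, lt_div_iff₀ hδ0] at hbig
      have h1 : (α * x ^ 2) * δ ≤ (1 + α * x ^ 2) * δ :=
        mul_le_mul_of_nonneg_right (by linarith) hδ0.le
      calc x ^ 2 * (δ * α) = (α * x ^ 2) * δ := by ring
        _ ≤ (1 + α * x ^ 2) * δ := h1
        _ ≤ 2 * K := le_of_lt hbig
    by_cases hnbig : c + K + 1 ≤ (n : ℝ)
    · -- n large: s ≥ X ≥ 1
      have hKX : |a - c| ≤ K := le_trans hac (by
        rw [div_le_iff₀ hX]
        exact le_mul_of_one_le_right (le_of_lt hK0) hX1)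
      have hna : 1 ≤ (n : ℝ) - a := by
        have h := le_trans (le_abs_self _) hKX
        linarith
      have h1 : 1 ≤ (n : ℝ) * X - β * x * sY := by
        rw [hsX]
        calc (1:ℝ) = 1 * 1 := by norm_num
          _ ≤ X * ((n:ℝ) - a) := mul_le_mul hX1 hna one_pos.le (le_of_lt hX)
      calc min (δ * α / 2) (min (δ * α / (2 * K)) (m * (δ * α) / (2 * K))) * x ^ 2
          ≤ δ * α / (2 * K) * (2 * K / (δ * α)) :=
            mul_le_mul (le_trans (min_le_right _ _) (min_le_left _ _)) hx2K
              (by positivity) (by positivity)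
        _ = 1 := by
            rw [div_mul_div_comm, div_eq_one_iff_eq (ne_of_gt (by positivity))]
            ring
        _ ≤ |(n : ℝ) * X - β * x * sY| := le_trans h1 (le_abs_self _)
    · -- finite set regime
      push_neg at hnbig
      have hpP : p ≤ Nat.ceil (2 * K / (δ * α)) := by
        have h1 : (p : ℝ) ≤ 2 * K / (δ * α) := by
          have := le_trans hx2 hx2K
          rwa [hxdef] at this
        have h2 : (2 : ℝ) * K / (δ * α) ≤ (Nat.ceil (2 * K / (δ * α)) : ℝ) := Nat.le_ceil _
        exact_mod_cast le_trans h1 h2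
      have hnN : n ≤ Nat.ceil (c + K + 1) := by
        have h2 : (c + K + 1 : ℝ) ≤ (Nat.ceil (c + K + 1) : ℝ) := Nat.le_ceil _
        have h3 : (n : ℝ) ≤ (Nat.ceil (c + K + 1) : ℝ) := le_of_lt (lt_of_lt_of_le hnbig h2)
        exact_mod_cast h3
      have hmem : (p, n) ∈ Finset.Icc 1 (Nat.ceil (2 * K / (δ * α)))
          ×ˢ Finset.Icc 1 (Nat.ceil (c + K + 1)) := by
        rw [Finset.mem_product, Finset.mem_Icc, Finset.mem_Icc]
        exact ⟨⟨hp, hpP⟩, hn, hnN⟩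
      have hmle' : m ≤ |(n : ℝ) * X - β * x * sY| := by
        have h := hmle (p, n) hmem
        dsimp only at h
        rw [← hxdef, ← hXdef, ← hsYdef] at h
        exact h hs'
      calc min (δ * α / 2) (min (δ * α / (2 * K)) (m * (δ * α) / (2 * K))) * x ^ 2
          ≤ m * (δ * α) / (2 * K) * (2 * K / (δ * α)) :=
            mul_le_mul (le_trans (min_le_right _ _) (min_le_right _ _)) hx2K
              (by positivity) (by positivity)
        _ = m := by
            rw [div_mul_div_comm, div_eq_iff (ne_of_gt (by positivity))]
            ring
        _ ≤ |(n : ℝ) * X - β * x * sY| := hmle'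

lemma bs_real_bound (α β γ c₂ : ℝ) (hα : 0 < α) (hβ : 0 < β) (hγ0 : 0 < γ) (hγ1 : γ < 1)
    (hc₂0 : 0 < c₂)
    (hkey : ∀ p n : ℕ, 1 ≤ p → 1 ≤ n →
      (n : ℝ) * (1 + α * (p : ℝ) ^ 2) ≠ β * (p : ℝ) * Real.sqrt (1 + γ * α * (p : ℝ) ^ 2) →
      c₂ * (p : ℝ) ^ 2 ≤
        |(n : ℝ) * (1 + α * (p : ℝ) ^ 2) - β * (p : ℝ) * Real.sqrt (1 + γ * α * (p : ℝ) ^ 2)|)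
    (p : ℕ) (q : ℤ) :
    |(q : ℝ) ^ 2 * (1 + α * (p : ℝ) ^ 2) ^ 2 - β ^ 2 * (p : ℝ) ^ 2 * (1 + γ * α * (p : ℝ) ^ 2)|⁻¹
        * ((p : ℝ) * |(q : ℝ)| * (1 + α * (p : ℝ) ^ 2))
        ≤ 1 / β + (1 + Real.sqrt (1 + γ * α)) / c₂ ∧
    |(q : ℝ) ^ 2 * (1 + α * (p : ℝ) ^ 2) ^ 2 - β ^ 2 * (p : ℝ) ^ 2 * (1 + γ * α * (p : ℝ) ^ 2)|⁻¹
        * (β * (p : ℝ) ^ 2)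
        ≤ 1 / β + (1 + Real.sqrt (1 + γ * α)) / c₂ ∧
    |(q : ℝ) ^ 2 * (1 + α * (p : ℝ) ^ 2) ^ 2 - β ^ 2 * (p : ℝ) ^ 2 * (1 + γ * α * (p : ℝ) ^ 2)|⁻¹
        * (β * (p : ℝ) ^ 2 * (1 + γ * α * (p : ℝ) ^ 2))
        ≤ 1 / β + (1 + Real.sqrt (1 + γ * α)) / c₂ := by
  have hM₀0 : 0 < 1 / β + (1 + Real.sqrt (1 + γ * α)) / c₂ :=
    add_pos (one_div_pos.mpr hβ)
      (div_pos (by positivity) hc₂0)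
  set M₀ := 1 / β + (1 + Real.sqrt (1 + γ * α)) / c₂ with hM₀def
  have hM₀1 : 1 / c₂ ≤ M₀ := by
    have h1 : 1 / c₂ ≤ (1 + Real.sqrt (1 + γ * α)) / c₂ := by
      gcongr
      linarith [Real.sqrt_nonneg (1 + γ * α)]
    have h2 : 0 < 1 / β := one_div_pos.mpr hβ
    rw [hM₀def]; linarith
  have hM₀2 : Real.sqrt (1 + γ * α) / c₂ ≤ M₀ := by
    have h1 : Real.sqrt (1 + γ * α) / c₂ ≤ (1 + Real.sqrt (1 + γ * α)) / c₂ := by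
      gcongr
      linarith
    have h2 : 0 < 1 / β := one_div_pos.mpr hβ
    rw [hM₀def]; linarith
  clear_value M₀
  -- trivial case p = 0
  rcases Nat.eq_zero_or_pos p with hp0 | hp
  · subst hp0
    push_cast
    norm_num
    exact hM₀0.le
  have hx : (1:ℝ) ≤ (p:ℝ) := by exact_mod_cast hp
  set x := (p : ℝ) with hxdef
  have hx0 : 0 < x := lt_of_lt_of_le one_pos hx
  have hx2 : x ≤ x ^ 2 := by nlinarith
  set X := 1 + α * x ^ 2 with hXdef
  have hX : 0 < X := by positivity
  have hX1 : 1 ≤ X := by nlinarith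
  set Y := 1 + γ * α * x ^ 2 with hYdef
  have hYpos : (0:ℝ) < Y := by positivity
  have hY1 : 1 ≤ Y := by rw [hYdef]; nlinarith
  set sY := Real.sqrt Y with hsYdef
  have hsY2 : sY ^ 2 = Y := Real.sq_sqrt (le_of_lt hYpos)
  have hsY0 : 0 < sY := Real.sqrt_pos.mpr hYpos
  have hsY1 : 1 ≤ sY := by
    rw [hsYdef, show (1:ℝ) = Real.sqrt 1 from (Real.sqrt_one).symm]
    exact Real.sqrt_le_sqrt (by linarith)
  have hsYx : sY ≤ Real.sqrt (1 + γ * α) * x := by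
    rw [hsYdef, hYdef]
    rw [show Real.sqrt (1 + γ * α) * x = Real.sqrt ((1 + γ * α) * x ^ 2) by
      rw [Real.sqrt_mul (by positivity), Real.sqrt_sq hx0.le]]
    exact Real.sqrt_le_sqrt (by nlinarith)
  set n := q.natAbs with hndef
  have hqn : |(q : ℝ)| = (n : ℝ) := by
    rw [hndef, Nat.cast_natAbs]
    push_cast
    ring
  have hq2 : (q : ℝ) ^ 2 = (n : ℝ) ^ 2 := by rw [← _root_.sq_abs, hqn]
  set s := (n : ℝ) * X - β * x * sY with hsdef
  set t := (n : ℝ) * X + β * x * sY with htdef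
  have hsraw : s = (n : ℝ) * (1 + α * (p : ℝ) ^ 2)
      - β * (p : ℝ) * Real.sqrt (1 + γ * α * (p : ℝ) ^ 2) := by
    rw [hsdef, hXdef, hsYdef, hYdef, hxdef]
  have hkeyraw : 1 ≤ n → s ≠ 0 → c₂ * x ^ 2 ≤ |s| := by
    intro hn hs0
    have hne : (n : ℝ) * (1 + α * (p : ℝ) ^ 2)
        ≠ β * (p : ℝ) * Real.sqrt (1 + γ * α * (p : ℝ) ^ 2) := by
      intro hEq
      apply hs0
      rw [hsraw, hEq, sub_self]
    have h2 := hkey p n hp hn hne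
    rw [← hsraw] at h2
    rw [hxdef]
    exact h2
  clear_value x X Y sY n s t
  clear hkey
  have hnn : (0:ℝ) ≤ (n:ℝ) := Nat.cast_nonneg n
  have hbx : 0 ≤ β * x := mul_nonneg hβ.le hx0.le
  have hnX : 0 ≤ (n:ℝ) * X := mul_nonneg hnn hX.le
  have hbxsY : 0 ≤ β * x * sY := mul_nonneg hbx hsY0.le
  -- case n = 0
  rcases Nat.eq_zero_or_pos n with hn0 | hn
  · have hq0 : |(q : ℝ)| = 0 := by rw [hqn, hn0]; norm_num
    have hD : (q : ℝ) ^ 2 * X ^ 2 - β ^ 2 * x ^ 2 * Y = -(β ^ 2 * x ^ 2 * Y) := by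
      rw [hq2, hn0]; push_cast; ring
    rw [hD, _root_.abs_neg, _root_.abs_of_pos (by positivity)]
    refine ⟨?_, ?_, ?_⟩
    · rw [hq0, mul_zero, zero_mul, mul_zero]
      exact hM₀0.le
    · have e : (β ^ 2 * x ^ 2 * Y)⁻¹ * (β * x ^ 2) = 1 / (β * Y) := by
        field_simp
      rw [e]
      have h1 : 1 / (β * Y) ≤ 1 / β :=
        one_div_le_one_div_of_le hβ (le_mul_of_one_le_right hβ.le hY1)
      have h2 : (0:ℝ) < (1 + Real.sqrt (1 + γ * α)) / c₂ := div_pos (by positivity) hc₂0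
      rw [hM₀def]; linarith
    · have e : (β ^ 2 * x ^ 2 * Y)⁻¹ * (β * x ^ 2 * Y) = 1 / β := by
        field_simp
      rw [e]
      have h2 : (0:ℝ) < (1 + Real.sqrt (1 + γ * α)) / c₂ := div_pos (by positivity) hc₂0
      rw [hM₀def]; linarith
  -- main case
  have hn1 : (1:ℝ) ≤ (n : ℝ) := by exact_mod_cast hn
  have hfac : (q : ℝ) ^ 2 * X ^ 2 - β ^ 2 * x ^ 2 * Y = s * t := by
    rw [hq2, hsdef, htdef]
    linear_combination (β ^ 2 * x ^ 2) * hsY2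
  have ht : 0 < t := by
    rw [htdef]
    have h1 : 0 < (n:ℝ) * X := mul_pos (by linarith) hX
    linarith
  by_cases hs0 : s = 0
  · rw [hfac, hs0, zero_mul, abs_zero, inv_zero, zero_mul, zero_mul, zero_mul]
    exact ⟨hM₀0.le, hM₀0.le, hM₀0.le⟩
  have hskey : c₂ * x ^ 2 ≤ |s| := hkeyraw hn hs0
  have hs' : 0 < |s| := _root_.abs_pos.mpr hs0
  have hDpos : 0 < |s| * t := mul_pos hs' ht
  rw [hfac, _root_.abs_mul, _root_.abs_of_pos ht]
  have hchain : ∀ z k : ℝ, 0 ≤ k → z ≤ k * (x ^ 2 * t) → k / c₂ ≤ M₀ →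
      (|s| * t)⁻¹ * z ≤ M₀ := by
    intro z k hk hz hkM
    rw [← div_eq_inv_mul, div_le_iff₀ hDpos]
    have e4 : c₂ * (x ^ 2 * t) ≤ |s| * t := by
      have h5 := mul_le_mul_of_nonneg_right hskey ht.le
      calc c₂ * (x ^ 2 * t) = c₂ * x ^ 2 * t := by ring
        _ ≤ |s| * t := h5
    have e5 : k * (x ^ 2 * t) ≤ (k / c₂) * (|s| * t) := by
      have h6 : (k / c₂) * (c₂ * (x ^ 2 * t)) = k * (x ^ 2 * t) := by
        field_simp
      rw [← h6]
      exact mul_le_mul_of_nonneg_left e4 (by positivity)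
    have e7 : (k / c₂) * (|s| * t) ≤ M₀ * (|s| * t) :=
      mul_le_mul_of_nonneg_right hkM hDpos.le
    linarith
  have htge : (n:ℝ) * X ≤ t := by rw [htdef]; linarith
  have htge2 : β * x * sY ≤ t := by rw [htdef]; linarith
  have htge3 : β * x ≤ t :=
    le_trans (le_mul_of_one_le_right hbx hsY1) htge2
  refine ⟨?_, ?_, ?_⟩
  · rw [hqn]
    refine hchain _ 1 one_pos.le ?_ (by rw [one_div] at hM₀1 ⊢; simpa using hM₀1)
    calc x * (n:ℝ) * X = x * ((n:ℝ) * X) := by ring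
      _ ≤ x * t := mul_le_mul_of_nonneg_left htge hx0.le
      _ ≤ x ^ 2 * t := mul_le_mul_of_nonneg_right hx2 ht.le
      _ = 1 * (x ^ 2 * t) := by ring
  · refine hchain _ 1 one_pos.le ?_ (by rw [one_div] at hM₀1 ⊢; simpa using hM₀1)
    calc β * x ^ 2 = x * (β * x) := by ring
      _ ≤ x * t := mul_le_mul_of_nonneg_left htge3 hx0.le
      _ ≤ x ^ 2 * t := mul_le_mul_of_nonneg_right hx2 ht.le
      _ = 1 * (x ^ 2 * t) := by ring
  · refine hchain _ (Real.sqrt (1 + γ * α)) (Real.sqrt_nonneg _) ?_ hM₀2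
    have hxsY : 0 ≤ x * sY := mul_nonneg hx0.le hsY0.le
    calc β * x ^ 2 * Y = (x * sY) * (β * x * sY) := by
          rw [← hsY2]; ring
      _ ≤ (x * sY) * t := mul_le_mul_of_nonneg_left htge2 hxsY
      _ ≤ (Real.sqrt (1 + γ * α) * x * x) * t := by
          apply mul_le_mul_of_nonneg_right ?_ ht.le
          calc x * sY ≤ x * (Real.sqrt (1 + γ * α) * x) :=
                mul_le_mul_of_nonneg_left hsYx hx0.le
            _ = Real.sqrt (1 + γ * α) * x * x := by ring
      _ = Real.sqrt (1 + γ * α) * (x ^ 2 * t) := by ring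

lemma bs_cabs_aux (d : ℝ) (p : ℕ) (z : ℂ) :
    ‖-((d : ℂ))⁻¹ * (p : ℂ) * z‖ = |d|⁻¹ * (p : ℝ) * ‖z‖ := by
  rw [norm_mul, norm_mul, norm_neg, norm_inv, Complex.norm_real, Real.norm_eq_abs, Complex.norm_natCast]

lemma bs_tri1_aux (r : ℝ) (hr : 0 ≤ r) (q : ℤ) (X : ℝ) (hX : 0 ≤ X) (f g : ℂ) :
    ‖Complex.I * (q : ℂ) * (X : ℂ) * f + (r : ℂ) * g‖
      ≤ |(q : ℝ)| * X * ‖f‖ + r * ‖g‖ := by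
  refine le_trans (norm_add_le _ _) (le_of_eq ?_)
  simp only [norm_mul, Complex.norm_I, Complex.norm_intCast, Complex.norm_real, Real.norm_eq_abs, one_mul]
  rw [_root_.abs_of_nonneg hX, _root_.abs_of_nonneg hr]

lemma bs_tri2_aux (r : ℝ) (hr : 0 ≤ r) (q : ℤ) (X : ℝ) (hX : 0 ≤ X) (f g : ℂ) :
    ‖(r : ℂ) * f - Complex.I * (q : ℂ) * (X : ℂ) * g‖
      ≤ r * ‖f‖ + |(q : ℝ)| * X * ‖g‖ := by
  rw [sub_eq_add_neg]
  refine le_trans (norm_add_le _ _) (le_of_eq ?_)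
  simp only [norm_neg, norm_mul, Complex.norm_I, Complex.norm_intCast,
    Complex.norm_real, Real.norm_eq_abs, one_mul]
  rw [_root_.abs_of_nonneg hX, _root_.abs_of_nonneg hr]


/-- Uniform estimate `|η| + |u| ≤ M(|f| + |g|)` for the Fourier coefficients of the
solution of the linearized Bona-Smith system, away from the kernel set. -/
theorem bona_smith_fourier_coefficient_bound (α β γ : ℝ) (hα : 0 < α) (hβ : 0 < β)
    (hγ0 : 0 < γ) (hγ1 : γ < 1)
    (hnd : ∀ q : ℤ, α * (q : ℝ) ^ 2 ≠ γ * β ^ 2) :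
    ∃ M : ℝ, 0 < M ∧ ∀ p : ℕ, ∀ q : ℤ,
      ¬ (1 ≤ p ∧ 1 ≤ q.natAbs ∧
          ((q.natAbs : ℝ)) * (1 + α * (p : ℝ) ^ 2) =
            β * (p : ℝ) * Real.sqrt (1 + γ * α * (p : ℝ) ^ 2)) →
      (p, q) ≠ (0, 0) →
      ∀ f g : ℂ,
        ‖(-(((q : ℝ) ^ 2 * (1 + α * (p : ℝ) ^ 2) ^ 2 -
              β ^ 2 * (p : ℝ) ^ 2 * (1 + γ * α * (p : ℝ) ^ 2) : ℝ) : ℂ)⁻¹ * (p : ℂ) *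
            (Complex.I * (q : ℂ) * ((1 + α * (p : ℝ) ^ 2 : ℝ) : ℂ) * f +
              ((β * (p : ℝ) : ℝ) : ℂ) * g))‖ +
        ‖(-(((q : ℝ) ^ 2 * (1 + α * (p : ℝ) ^ 2) ^ 2 -
              β ^ 2 * (p : ℝ) ^ 2 * (1 + γ * α * (p : ℝ) ^ 2) : ℝ) : ℂ)⁻¹ * (p : ℂ) *
            (((β * (p : ℝ) + γ * α * β * (p : ℝ) ^ 3 : ℝ) : ℂ) * f -
              Complex.I * (q : ℂ) * ((1 + α * (p : ℝ) ^ 2 : ℝ) : ℂ) * g))‖ ≤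
        M * (‖f‖ + ‖g‖) := by
  obtain ⟨c₂, hc₂0, hkey⟩ := bs_key_aux α β γ hα hβ hγ0 hγ1 hnd
  have hM₀0 : 0 < 1 / β + (1 + Real.sqrt (1 + γ * α)) / c₂ :=
    add_pos (one_div_pos.mpr hβ) (div_pos (by positivity) hc₂0)
  refine ⟨2 * (1 / β + (1 + Real.sqrt (1 + γ * α)) / c₂), by linarith, ?_⟩
  intro p q _ _ f g
  obtain ⟨hA, hB, hC⟩ := bs_real_bound α β γ c₂ hα hβ hγ0 hγ1 hc₂0 hkey p q
  have hf0 : 0 ≤ ‖f‖ := norm_nonneg f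
  have hg0 : 0 ≤ ‖g‖ := norm_nonneg g
  have hx0 : (0:ℝ) ≤ (p : ℝ) := Nat.cast_nonneg p
  have hX0 : (0:ℝ) ≤ 1 + α * (p : ℝ) ^ 2 := by positivity
  have hr1 : (0:ℝ) ≤ β * (p : ℝ) := by positivity
  have hr2 : (0:ℝ) ≤ β * (p : ℝ) + γ * α * β * (p : ℝ) ^ 3 := by positivity
  rw [bs_cabs_aux, bs_cabs_aux]
  have hD0 : (0:ℝ) ≤ |(q : ℝ) ^ 2 * (1 + α * (p : ℝ) ^ 2) ^ 2 -
      β ^ 2 * (p : ℝ) ^ 2 * (1 + γ * α * (p : ℝ) ^ 2)|⁻¹ * (p : ℝ) :=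
    mul_nonneg (inv_nonneg.mpr (_root_.abs_nonneg _)) hx0
  have h1 := mul_le_mul_of_nonneg_left
    (bs_tri1_aux (β * (p : ℝ)) hr1 q (1 + α * (p : ℝ) ^ 2) hX0 f g) hD0
  have h2 := mul_le_mul_of_nonneg_left
    (bs_tri2_aux (β * (p : ℝ) + γ * α * β * (p : ℝ) ^ 3) hr2 q (1 + α * (p : ℝ) ^ 2) hX0 f g) hD0
  have k1 := mul_le_mul_of_nonneg_right hA hf0
  have k2 := mul_le_mul_of_nonneg_right hB hg0
  have k3 := mul_le_mul_of_nonneg_right hC hf0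
  have k4 := mul_le_mul_of_nonneg_right hA hg0
  nlinarith [h1, h2, k1, k2, k3, k4, hf0, hg0]
end

section
/- Let α > 0, β > 0 and 0 < γ < 1 be real, let p ≥ 1 be an integer and let q ∈ ℤ be nonzero with q²(1+αp²)² = β²p²(1+γαp²), and let f, g ∈ ℂ. Then the linear system i q (1+αp²) η + βp u = p f, (βp + γαβp³) η − i q (1+αp²) u = p g has a solution (η,u) ∈ ℂ² if and only if g + sgn(q)·i·√(1+γαp²)·f = 0; in that case, the set of solutions is { (η* + C, u* − sgn(q)·i·√(1+γαp²)·C) : C ∈ ℂ }, where η* = −sgn(q)·i·√(1+γαp²)·p f / (|q|(1+αp²)√(1+γαp²) + βp) and u* = p f / (|q|(1+αp²)√(1+γαp²) + βp). -/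
open Complex

lemma aux_singular (σ s b b2 d P f g : ℂ) (hσ : σ ^ 2 = 1) (hb : b ≠ 0) (hP : P ≠ 0)
    (hb2 : b2 = b * s ^ 2) (hd : d = b * (s ^ 2 + 1)) (hd0 : d ≠ 0) :
    ((∃ ηu : ℂ × ℂ, σ * Complex.I * (b * s) * ηu.1 + b * ηu.2 = P * f ∧
        b2 * ηu.1 - σ * Complex.I * (b * s) * ηu.2 = P * g) ↔
      g + σ * Complex.I * s * f = 0) ∧
    (g + σ * Complex.I * s * f = 0 →
      {ηu : ℂ × ℂ | σ * Complex.I * (b * s) * ηu.1 + b * ηu.2 = P * f ∧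
          b2 * ηu.1 - σ * Complex.I * (b * s) * ηu.2 = P * g} =
        {ηu : ℂ × ℂ | ∃ C : ℂ,
          ηu.1 = -σ * Complex.I * s * P * f / d + C ∧
          ηu.2 = P * f / d - σ * Complex.I * s * C}) := by
  subst hb2 hd
  have hs1 : s ^ 2 + 1 ≠ 0 := by
    intro h; exact hd0 (by rw [h, mul_zero])
  have hneg : -σ * Complex.I = -(σ * Complex.I) := by ring
  set t := σ * Complex.I with htdef
  have ht : t ^ 2 = -1 := by
    simp only [htdef, mul_pow, hσ, Complex.I_sq, one_mul]
  rw [hneg]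
  constructor
  · constructor
    · rintro ⟨⟨η, u⟩, h1, h2⟩
      have key : P * (g + t * s * f) = 0 := by
        linear_combination -h2 - t * s * h1 + b * s ^ 2 * η * ht
      exact (mul_eq_zero.mp key).resolve_left hP
    · intro hc
      refine ⟨⟨-(t) * s * P * f / (b * (s ^ 2 + 1)),
          P * f / (b * (s ^ 2 + 1))⟩, ?_, ?_⟩
      · field_simp
        linear_combination (-(f*s^2)) * ht
      · field_simp
        linear_combination (-(s^2+1)) * hc
  · intro hc
    ext ⟨η, u⟩
    simp only [Set.mem_setOf_eq]
    constructor
    · rintro ⟨h1, h2⟩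
      refine ⟨η + t * s * P * f / (b * (s ^ 2 + 1)), by ring, ?_⟩
      field_simp
      linear_combination (s^2+1) * h1 + s^2*P*f * ht
    · rintro ⟨C, h1, h2⟩
      subst h1 h2
      constructor
      · field_simp
        linear_combination (-(s^2*P*f)) * ht
      · field_simp
        linear_combination (-(P*(s^2+1))) * hc + (b*s^2*(s^2+1)*C) * ht

/-- Singular Fourier-mode case `Δ(p,q) = 0`, `q ≠ 0`: the system is solvable iff the
compatibility condition `g + sgn(q) i √(1+γαp²) f = 0` holds, and in that case the
solution set is the displayed one-complex-parameter family. -/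
theorem bona_smith_fourier_mode_singular (α β γ : ℝ) (hα : 0 < α) (hβ : 0 < β)
    (hγ0 : 0 < γ) (hγ1 : γ < 1) (p : ℕ) (hp : 1 ≤ p) (q : ℤ) (hq : q ≠ 0)
    (hΔ : (q : ℝ) ^ 2 * (1 + α * (p : ℝ) ^ 2) ^ 2 =
        β ^ 2 * (p : ℝ) ^ 2 * (1 + γ * α * (p : ℝ) ^ 2))
    (f g : ℂ) :
    ((∃ ηu : ℂ × ℂ,
        Complex.I * (q : ℂ) * ((1 + α * (p : ℝ) ^ 2 : ℝ) : ℂ) * ηu.1 +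
            ((β * (p : ℝ) : ℝ) : ℂ) * ηu.2 = (p : ℂ) * f ∧
          ((β * (p : ℝ) + γ * α * β * (p : ℝ) ^ 3 : ℝ) : ℂ) * ηu.1 -
            Complex.I * (q : ℂ) * ((1 + α * (p : ℝ) ^ 2 : ℝ) : ℂ) * ηu.2 = (p : ℂ) * g) ↔
      g + (Int.sign q : ℂ) * Complex.I *
          ((Real.sqrt (1 + γ * α * (p : ℝ) ^ 2) : ℝ) : ℂ) * f = 0) ∧
    (g + (Int.sign q : ℂ) * Complex.I *
        ((Real.sqrt (1 + γ * α * (p : ℝ) ^ 2) : ℝ) : ℂ) * f = 0 →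
      {ηu : ℂ × ℂ |
          Complex.I * (q : ℂ) * ((1 + α * (p : ℝ) ^ 2 : ℝ) : ℂ) * ηu.1 +
              ((β * (p : ℝ) : ℝ) : ℂ) * ηu.2 = (p : ℂ) * f ∧
            ((β * (p : ℝ) + γ * α * β * (p : ℝ) ^ 3 : ℝ) : ℂ) * ηu.1 -
              Complex.I * (q : ℂ) * ((1 + α * (p : ℝ) ^ 2 : ℝ) : ℂ) * ηu.2 = (p : ℂ) * g} =
        {ηu : ℂ × ℂ | ∃ C : ℂ,
          ηu.1 = -(Int.sign q : ℂ) * Complex.I *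
              ((Real.sqrt (1 + γ * α * (p : ℝ) ^ 2) : ℝ) : ℂ) * (p : ℂ) * f /
              ((|(q : ℝ)| * (1 + α * (p : ℝ) ^ 2) * Real.sqrt (1 + γ * α * (p : ℝ) ^ 2) +
                β * (p : ℝ) : ℝ) : ℂ) + C ∧
          ηu.2 = (p : ℂ) * f /
              ((|(q : ℝ)| * (1 + α * (p : ℝ) ^ 2) * Real.sqrt (1 + γ * α * (p : ℝ) ^ 2) +
                β * (p : ℝ) : ℝ) : ℂ) -
            (Int.sign q : ℂ) * Complex.I *
              ((Real.sqrt (1 + γ * α * (p : ℝ) ^ 2) : ℝ) : ℂ) * C}) := by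
  have hp0 : (0:ℝ) < (p:ℝ) := by exact_mod_cast hp
  set S : ℝ := Real.sqrt (1 + γ * α * (p:ℝ) ^ 2) with hSdef
  have hpos : (0:ℝ) < 1 + γ * α * (p:ℝ) ^ 2 := by positivity
  have hS2 : S ^ 2 = 1 + γ * α * (p:ℝ) ^ 2 := Real.sq_sqrt hpos.le
  have hSpos : 0 < S := Real.sqrt_pos.mpr hpos
  have hqa : |(q:ℝ)| * (1 + α * (p:ℝ) ^ 2) = β * (p:ℝ) * S := by
    have h2 : (|(q:ℝ)| * (1 + α * (p:ℝ) ^ 2)) ^ 2 = (β * (p:ℝ) * S) ^ 2 := by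
      rw [mul_pow, _root_.sq_abs, mul_pow, mul_pow, hS2]; linarith [hΔ]
    have hbp : (0:ℝ) < β * (p:ℝ) * S := by positivity
    have ha : (0:ℝ) ≤ |(q:ℝ)| * (1 + α * (p:ℝ) ^ 2) := by positivity
    nlinarith [h2, hbp, ha]
  have hq' : (q:ℝ) = (Int.sign q : ℝ) * |(q:ℝ)| := by
    have h := congrArg (fun n : ℤ => (n:ℝ)) (Int.sign_mul_abs q)
    push_cast at h
    exact h.symm
  have hr : (q:ℝ) * (1 + α * (p:ℝ) ^ 2) = (Int.sign q : ℝ) * (β * (p:ℝ) * S) := by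
    rw [hq', mul_assoc, hqa]
  have hE1 : Complex.I * (q:ℂ) * ((1 + α * (p:ℝ) ^ 2 : ℝ) : ℂ) =
      (Int.sign q : ℂ) * Complex.I * (((β * (p:ℝ) : ℝ) : ℂ) * ((S : ℝ) : ℂ)) := by
    have hrc := congrArg Complex.ofReal hr
    push_cast at hrc ⊢
    linear_combination Complex.I * hrc
  have hb2c : ((β * (p:ℝ) + γ * α * β * (p:ℝ) ^ 3 : ℝ) : ℂ) =
      ((β * (p:ℝ) : ℝ) : ℂ) * ((S : ℝ) : ℂ) ^ 2 := by
    rw [← Complex.ofReal_pow, ← Complex.ofReal_mul]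
    exact congrArg _ (by rw [hS2]; ring)
  have hdc : ((|(q:ℝ)| * (1 + α * (p:ℝ) ^ 2) * S + β * (p:ℝ) : ℝ) : ℂ) =
      ((β * (p:ℝ) : ℝ) : ℂ) * (((S : ℝ) : ℂ) ^ 2 + 1) := by
    rw [← Complex.ofReal_pow, ← Complex.ofReal_one, ← Complex.ofReal_add, ← Complex.ofReal_mul]
    exact congrArg _ (by rw [hqa]; ring)
  have hσ : ((Int.sign q : ℤ) : ℂ) ^ 2 = 1 := by
    have h1 : Int.sign q = 1 ∨ Int.sign q = -1 := by
      rcases lt_trichotomy q 0 with h | h | h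
      · right; simpa using Int.sign_eq_neg_one_iff_neg.mpr h
      · exact absurd h hq
      · left; simpa using Int.sign_eq_one_iff_pos.mpr h
    rcases h1 with h | h <;> simp [h]
  have hb : ((β * (p:ℝ) : ℝ) : ℂ) ≠ 0 := by
    exact Complex.ofReal_ne_zero.mpr (by positivity)
  have hP : ((p:ℕ) : ℂ) ≠ 0 := Nat.cast_ne_zero.mpr (by omega)
  have hd0 : ((|(q:ℝ)| * (1 + α * (p:ℝ) ^ 2) * S + β * (p:ℝ) : ℝ) : ℂ) ≠ 0 := by
    refine Complex.ofReal_ne_zero.mpr (ne_of_gt ?_)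
    positivity
  rw [hdc] at hd0
  rw [hE1, hb2c, hdc]
  exact aux_singular ((Int.sign q : ℤ) : ℂ) ((S : ℝ) : ℂ) ((β * (p:ℝ) : ℝ) : ℂ) _ _ ((p:ℕ) : ℂ)
    f g hσ hb hP rfl rfl hd0
end

section
/- Let α > 0, β > 0 and 0 < γ < 1 be real, and let p₀, q₀ be positive integers with q₀(1+αp₀²) = βp₀√(1+γαp₀²). Define η(x,t) = cos(q₀ t)·cos(p₀ x) and u(x,t) = √(1+γαp₀²)·sin(q₀ t)·sin(p₀ x). Then for all (x,t) ∈ ℝ², these smooth functions satisfy the linearized re-scaled Bona-Smith system: ∂_t η + β ∂_x u − α ∂_{xxt} η = 0 and ∂_t u + β ∂_x η − γαβ ∂_{xxx} η − α ∂_{xxt} u = 0, where subscripts denote the corresponding iterated partial derivatives. -/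
lemma deriv_cos_mul (c t : ℝ) :
    deriv (fun s => Real.cos (c * s)) t = -(c * Real.sin (c * t)) := by
  have h := (Real.hasDerivAt_cos (c * t)).comp t ((hasDerivAt_id t).const_mul c)
  simpa [mul_comm, Function.comp_def] using h.deriv

lemma deriv_sin_mul (c t : ℝ) :
    deriv (fun s => Real.sin (c * s)) t = c * Real.cos (c * t) := by
  have h := (Real.hasDerivAt_sin (c * t)).comp t ((hasDerivAt_id t).const_mul c)
  simpa [mul_comm, Function.comp_def] using h.deriv

/-- The real kernel eigenfunctions `η(x,t) = cos(q₀t)cos(p₀x)`,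
`u(x,t) = √(1+γαp₀²) sin(q₀t) sin(p₀x)` solve the linearized re-scaled
Bona-Smith system when `q₀(1+αp₀²) = βp₀√(1+γαp₀²)`. -/
theorem bona_smith_kernel_eigenfunction (α β γ : ℝ) (hα : 0 < α) (hβ : 0 < β)
    (hγ0 : 0 < γ) (hγ1 : γ < 1) (p₀ q₀ : ℕ) (hp₀ : 0 < p₀) (hq₀ : 0 < q₀)
    (hker : (q₀ : ℝ) * (1 + α * (p₀ : ℝ) ^ 2) =
      β * (p₀ : ℝ) * Real.sqrt (1 + γ * α * (p₀ : ℝ) ^ 2)) :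
    ∀ x t : ℝ,
      (let η : ℝ → ℝ → ℝ := fun x t => Real.cos (q₀ * t) * Real.cos (p₀ * x)
       let u : ℝ → ℝ → ℝ := fun x t =>
         Real.sqrt (1 + γ * α * (p₀ : ℝ) ^ 2) * Real.sin (q₀ * t) * Real.sin (p₀ * x)
       -- ∂_t η + β ∂_x u − α ∂_{xxt} η = 0
       (deriv (fun s => η x s) t + β * deriv (fun y => u y t) x -
          α * deriv (fun s => deriv (fun y => deriv (fun y' => η y' s) y) x) t = 0) ∧
       -- ∂_t u + β ∂_x η − γαβ ∂_{xxx} η − α ∂_{xxt} u = 0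
       (deriv (fun s => u x s) t + β * deriv (fun y => η y t) x -
          γ * α * β *
            deriv (fun y => deriv (fun y' => deriv (fun y'' => η y'' t) y') y) x -
          α * deriv (fun s => deriv (fun y => deriv (fun y' => u y' s) y) x) t = 0)) := by
  intro x t
  have hSpos : (0:ℝ) < 1 + γ * α * (p₀ : ℝ) ^ 2 := by positivity
  have hs : Real.sqrt (1 + γ * α * (p₀ : ℝ) ^ 2) ^ 2 = 1 + γ * α * (p₀ : ℝ) ^ 2 :=
    Real.sq_sqrt hSpos.le
  set s := Real.sqrt (1 + γ * α * (p₀ : ℝ) ^ 2) with hsdef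
  constructor
  · simp only [deriv_mul_const_field, deriv_const_mul_field, mul_assoc,
      deriv_cos_mul, deriv_sin_mul, deriv.fun_neg', mul_neg, neg_mul]
    linear_combination (-(Real.sin (q₀ * t) * Real.cos (p₀ * x))) * hker
  · simp only [deriv_mul_const_field, deriv_const_mul_field, mul_assoc,
      deriv_cos_mul, deriv_sin_mul, deriv.fun_neg', mul_neg, neg_mul]
    linear_combination (s * Real.cos (q₀ * t) * Real.sin (p₀ * x)) * hker +
      (β * (p₀:ℝ) * Real.cos (q₀ * t) * Real.sin (p₀ * x)) * hs
end

section
/- Let α > 0, β > 0, b > 0, d > 0 and c < 0 be real. Then the set {(p,q) ∈ ℕ×ℤ : p ≥ 1 and q²(1+αbp²)(1+αdp²) + β²p²(αcp² − 1) = 0} is finite. -/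
open Polynomial

private lemma abcd_slice_finite (α β b c d : ℝ) (hα : 0 < α) (hβ : 0 < β)
    (hb : 0 < b) (hd : 0 < d) (hc : c < 0) (q : ℤ) :
    ({p : ℕ | 1 ≤ p ∧
      (q : ℝ) ^ 2 * (1 + α * b * (p : ℝ) ^ 2) * (1 + α * d * (p : ℝ) ^ 2) +
        β ^ 2 * (p : ℝ) ^ 2 * (α * c * (p : ℝ) ^ 2 - 1) = 0}).Finite := by
  by_cases hq : (q : ℝ) = 0
  · convert Set.finite_empty
    ext p
    simp only [Set.mem_setOf_eq, Set.mem_empty_iff_false, iff_false, not_and]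
    intro hp heq
    rw [hq] at heq
    have hP1 : (1 : ℝ) ≤ (p : ℝ) := by exact_mod_cast hp
    have h1 : (0:ℝ) < (p:ℝ)^2 := by positivity
    have h2 : α * c * (p:ℝ)^2 - 1 < 0 := by
      nlinarith [mul_pos (mul_pos hα (neg_pos.mpr hc)) h1]
    nlinarith [mul_pos (mul_pos (pow_pos hβ 2) h1) (neg_pos.mpr h2)]
  · set P : Polynomial ℝ :=
      C ((q : ℝ) ^ 2) * ((1 + C (α * b) * X ^ 2) * (1 + C (α * d) * X ^ 2)) +
        C (β ^ 2) * (X ^ 2 * (C (α * c) * X ^ 2 - 1)) with hP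
    have hPne : P ≠ 0 := by
      intro h
      have h0 := congrArg (eval 0) h
      simp [hP] at h0
      exact hq (by exact_mod_cast h0)
    have hroots : {x : ℝ | P.IsRoot x}.Finite := Polynomial.finite_setOf_isRoot hPne
    apply Set.Finite.subset
      (hroots.preimage (Set.injOn_of_injective Nat.cast_injective))
    intro p hp
    obtain ⟨-, heq⟩ := hp
    simp only [Set.mem_preimage, Set.mem_setOf_eq, IsRoot, hP]
    simp only [eval_add, eval_mul, eval_C, eval_one, eval_pow, eval_X, eval_sub, eval_one]
    linarith [heq]

/-- For the abcd-system with `a = 0`, `b > 0`, `c < 0`, `d > 0`, the set of modes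
`(p,q)` with `p ≥ 1` annihilating the determinant
`Δ(p,q) = q²(1+αbp²)(1+αdp²) + β²p²(αcp² − 1)` is finite. -/
theorem abcd_kernel_set_finite (α β b c d : ℝ) (hα : 0 < α) (hβ : 0 < β)
    (hb : 0 < b) (hd : 0 < d) (hc : c < 0) :
    {pq : ℕ × ℤ | 1 ≤ pq.1 ∧
      (pq.2 : ℝ) ^ 2 * (1 + α * b * (pq.1 : ℝ) ^ 2) * (1 + α * d * (pq.1 : ℝ) ^ 2) +
        β ^ 2 * (pq.1 : ℝ) ^ 2 * (α * c * (pq.1 : ℝ) ^ 2 - 1) = 0}.Finite := by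
  set M : ℝ := β ^ 2 * (1 - α * c) / (α ^ 2 * (b * d)) with hMdef
  set K : ℤ := ⌈max 1 M⌉ with hKdef
  have hbig : {pq : ℕ × ℤ | 1 ≤ pq.1 ∧
      (pq.2 : ℝ) ^ 2 * (1 + α * b * (pq.1 : ℝ) ^ 2) * (1 + α * d * (pq.1 : ℝ) ^ 2) +
        β ^ 2 * (pq.1 : ℝ) ^ 2 * (α * c * (pq.1 : ℝ) ^ 2 - 1) = 0} ⊆
      ⋃ q ∈ (Finset.Icc (-K) K : Finset ℤ), (fun p => (p, q)) ''
        {p : ℕ | 1 ≤ p ∧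
          (q : ℝ) ^ 2 * (1 + α * b * (p : ℝ) ^ 2) * (1 + α * d * (p : ℝ) ^ 2) +
            β ^ 2 * (p : ℝ) ^ 2 * (α * c * (p : ℝ) ^ 2 - 1) = 0} := by
    rintro ⟨p, q⟩ ⟨hp, heq⟩
    simp only [Set.mem_iUnion, Finset.mem_coe, Finset.mem_Icc]
    -- bound on q
    have hP1 : (1 : ℝ) ≤ (p : ℝ) := by exact_mod_cast hp
    have hD1 : α * b * (p:ℝ)^2 ≤ 1 + α * b * (p:ℝ)^2 := by linarith
    have hD2 : α * d * (p:ℝ)^2 ≤ 1 + α * d * (p:ℝ)^2 := by linarith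
    have hD1p : (0:ℝ) < α * b * (p:ℝ)^2 := by positivity
    have hD2p : (0:ℝ) < α * d * (p:ℝ)^2 := by positivity
    have hp2 : (1:ℝ) ≤ (p:ℝ)^2 := by nlinarith
    have e1 : (q:ℝ)^2 * ((α*b*(p:ℝ)^2) * (α*d*(p:ℝ)^2)) ≤
        (q:ℝ)^2 * ((1 + α*b*(p:ℝ)^2) * (1 + α*d*(p:ℝ)^2)) :=
      mul_le_mul_of_nonneg_left (mul_le_mul hD1 hD2 hD2p.le (by linarith)) (sq_nonneg _)
    have e2 : β ^ 2 * (p:ℝ)^2 * (1 - α*c*(p:ℝ)^2) ≤ β^2 * (1 - α*c) * (p:ℝ)^4 := by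
      nlinarith [mul_nonneg (mul_nonneg (sq_nonneg β) (sq_nonneg (p:ℝ)))
        (by linarith : (0:ℝ) ≤ (p:ℝ)^2 - 1)]
    have hq2 : (q:ℝ)^2 * (α^2 * (b * d)) * (p:ℝ)^4 ≤ β^2 * (1 - α * c) * (p:ℝ)^4 := by
      nlinarith [e1, e2, heq]
    have hp4 : (0:ℝ) < (p:ℝ)^4 := by positivity
    have hq2' : (q:ℝ)^2 * (α^2 * (b * d)) ≤ β^2 * (1 - α * c) :=
      le_of_mul_le_mul_right (by linarith [hq2]) hp4
    have habd : (0:ℝ) < α^2 * (b * d) := by positivity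
    have hqM : (q:ℝ)^2 ≤ M := by
      rw [hMdef, le_div_iff₀ habd]; exact hq2'
    have habs : |(q:ℝ)| ≤ max 1 M := by
      rcases le_or_gt (|(q:ℝ)|) 1 with h | h
      · exact h.trans (le_max_left _ _)
      · have : |(q:ℝ)| ≤ |(q:ℝ)|^2 := by nlinarith [abs_nonneg (q:ℝ)]
        calc |(q:ℝ)| ≤ |(q:ℝ)|^2 := this
          _ = (q:ℝ)^2 := sq_abs _
          _ ≤ M := hqM
          _ ≤ max 1 M := le_max_right _ _
    have habsK : |q| ≤ K := by
      have : ((|q| : ℤ) : ℝ) ≤ (K : ℝ) := by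
        rw [Int.cast_abs]
        exact habs.trans (Int.le_ceil _)
      exact_mod_cast this
    refine ⟨q, ⟨(abs_le.mp habsK).1, (abs_le.mp habsK).2⟩, ⟨p, ⟨hp, heq⟩, rfl⟩⟩
  exact Set.Finite.subset
    (Set.Finite.biUnion (Finset.finite_toSet _)
      (fun q _ => (abcd_slice_finite α β b c d hα hβ hb hd hc q).image _)) hbig
end

section
/- Let α > 0, β > 0, b > 0, d > 0 and c < 0 be real, and assume that αbd·q² ≠ −β²c for every integer q. Then there exists a constant M > 0, depending only on (α, β, b, c, d), such that for every pair (p,q) ∈ ℕ×ℤ with (p,q) ≠ (0,0) and Δ(p,q) := q²(1+αbp²)(1+αdp²) + β²p²(αcp² − 1) ≠ 0, one has A(p,q) := (p|q|(1+αdp²) + βp²(1 − αcp²)) / |Δ(p,q)| ≤ M and B(p,q) := (βp² + p|q|(1+αbp²)) / |Δ(p,q)| ≤ M. -/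
/-!
Every mode is measured against the weight `W(p,q) = (1 + q²)(1 + p²)²`, which dominates both
numerators. Off a finite set of modes `|Δ| ≥ ε W`: when `q²` is large, the positive term
`q²(1 + αbp²)(1 + αdp²)` swallows `β²p²(1 - αcp²)`; when `q²` is bounded, `Δ` is a quadratic
in `p²` whose leading coefficient `α(αbd q² + β²c)` ranges over finitely many values, all nonzero
by the nondegeneracy hypothesis, so it wins once `p` is large. On the finitely many remaining
modes the ratios take finitely many values.
-/

open Filter Set

lemma abs_le_one_add_sq (x : ℝ) : |x| ≤ 1 + x ^ 2 := by
  nlinarith [sq_abs x, sq_nonneg (|x| - 1)]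

lemma one_add_mul_sq_le {a : ℝ} (ha : 0 ≤ a) (p : ℝ) :
    1 + a * p ^ 2 ≤ (1 + a) * (1 + p ^ 2) := by
  nlinarith [sq_nonneg p]

lemma min_one_mul_one_add_le {u x : ℝ} (hx : 0 ≤ x) : min 1 u * (1 + x) ≤ 1 + u * x := by
  nlinarith [min_le_left 1 u, min_le_right 1 u, mul_le_mul_of_nonneg_right (min_le_right 1 u) hx]

lemma half_mul_sq_le_abs_quadratic {a b c m K x : ℝ} (hm : m ≤ |a|) (hK : |b| + |c| ≤ K)
    (hx : 1 ≤ x) (hxK : 2 * K ≤ m * x) : m / 2 * x ^ 2 ≤ |a * x ^ 2 + b * x + c| := by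
  have hlead : m * x ^ 2 ≤ |a * x ^ 2| := by
    rw [abs_mul, abs_of_nonneg (sq_nonneg x)]; gcongr
  have hlow : |b * x + c| ≤ K * x :=
    calc |b * x + c| ≤ |b| * x + |c| := by
          simpa [abs_mul, abs_of_nonneg (by linarith : (0 : ℝ) ≤ x)] using abs_add_le (b * x) c
      _ ≤ K * x := by nlinarith [abs_nonneg c]
  have htri := abs_sub_abs_le_abs_sub (a * x ^ 2) (-(b * x + c))
  rw [abs_neg, sub_neg_eq_add, ← add_assoc] at htri
  nlinarith

lemma exists_pos_le_abs_of_finite {ι : Type*} {s : Set ι} (hs : s.Finite) {f : ι → ℝ}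
    (hf : ∀ i ∈ s, f i ≠ 0) : ∃ δ > 0, ∀ i ∈ s, δ ≤ |f i| := by
  rcases s.eq_empty_or_nonempty with rfl | hne
  · exact ⟨1, one_pos, by simp⟩
  obtain ⟨i₀, hi₀, hmin⟩ := Set.exists_min_image s (fun i => |f i|) hs hne
  exact ⟨|f i₀|, abs_pos.2 (hf i₀ hi₀), hmin⟩

lemma eventually_le_natCast_sq (R : ℝ) : ∀ᶠ p : ℕ in cofinite, R ≤ (p : ℝ) ^ 2 := by
  rw [Nat.cofinite_eq_atTop]
  exact ((tendsto_pow_atTop two_ne_zero).comp tendsto_natCast_atTop_atTop).eventually_ge_atTop R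

lemma eventually_le_intCast_sq (R : ℝ) : ∀ᶠ q : ℤ in cofinite, R ≤ (q : ℝ) ^ 2 := by
  have h := ((tendsto_pow_atTop two_ne_zero).comp
    (tendsto_norm_cocompact_atTop.comp Int.tendsto_coe_cofinite)).eventually_ge_atTop R
  simpa using h

lemma bddAbove_range_div_abs {ι : Type*} {f g w : ι → ℝ} {K ε : ℝ} (hK : 0 ≤ K)
    (hε : 0 < ε) (hf : ∀ i, f i ≤ K * w i) (hg : ∀ᶠ i in cofinite, ε * w i ≤ |g i|) :
    BddAbove (range fun i => f i / |g i|) := by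
  refine (isBoundedUnder_of_eventually_le (a := K / ε) ?_).bddAbove_range_of_cofinite
  filter_upwards [hg] with i hi
  refine div_le_of_le_mul₀ (abs_nonneg _) (by positivity) ?_
  calc f i ≤ K * w i := hf i
    _ = K / ε * (ε * w i) := by field_simp
    _ ≤ K / ε * |g i| := by gcongr

namespace AbcdSystem

def delta (α β b c d p q : ℝ) : ℝ :=
  q ^ 2 * (1 + α * b * p ^ 2) * (1 + α * d * p ^ 2) + β ^ 2 * p ^ 2 * (α * c * p ^ 2 - 1)

def weight (p q : ℝ) : ℝ := (1 + q ^ 2) * (1 + p ^ 2) ^ 2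

lemma weight_nonneg (p q : ℝ) : 0 ≤ weight p q := by unfold weight; positivity

lemma delta_eq_quadratic (α β b c d p q : ℝ) :
    delta α β b c d p q = α * (α * b * d * q ^ 2 + β ^ 2 * c) * (p ^ 2) ^ 2 +
      (α * (b + d) * q ^ 2 - β ^ 2) * p ^ 2 + q ^ 2 := by
  unfold delta; ring

lemma mul_abs_mul_le_weight {a : ℝ} (ha : 0 ≤ a) (p q : ℝ) :
    p * |q| * (1 + a * p ^ 2) ≤ (1 + a) * weight p q :=
  calc p * |q| * (1 + a * p ^ 2) ≤ |p| * |q| * (1 + a * p ^ 2) := by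
        gcongr; exact le_abs_self p
    _ ≤ (1 + p ^ 2) * (1 + q ^ 2) * ((1 + a) * (1 + p ^ 2)) := by
        gcongr
        exacts [abs_le_one_add_sq p, abs_le_one_add_sq q, one_add_mul_sq_le ha p]
    _ = (1 + a) * weight p q := by unfold weight; ring

lemma sq_mul_le_weight {a : ℝ} (ha : 0 ≤ a) (p q : ℝ) :
    p ^ 2 * (1 + a * p ^ 2) ≤ (1 + a) * weight p q :=
  calc p ^ 2 * (1 + a * p ^ 2) ≤ (1 + p ^ 2) * ((1 + a) * (1 + p ^ 2)) := by
        gcongr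
        exacts [by linarith, one_add_mul_sq_le ha p]
    _ ≤ (1 + p ^ 2) * ((1 + a) * (1 + p ^ 2)) * (1 + q ^ 2) :=
        le_mul_of_one_le_right (by positivity) (by linarith [sq_nonneg q])
    _ = (1 + a) * weight p q := by unfold weight; ring

lemma sq_mul_one_sub_le_mul_prod {α b c d : ℝ} (hα : 0 < α) (hb : 0 < b) (hd : 0 < d)
    (hc : c ≤ 0) (β : ℝ) {x : ℝ} (hx : 0 ≤ x) :
    β ^ 2 * x * (1 - α * c * x) ≤
      (β ^ 2 / (α * b) + -c * β ^ 2 / (α * b * d)) * ((1 + α * b * x) * (1 + α * d * x)) := by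
  have hlin : α * b * x ≤ (1 + α * b * x) * (1 + α * d * x) := by
    nlinarith [mul_nonneg (mul_nonneg hα.le hb.le) hx, mul_nonneg (mul_nonneg hα.le hd.le) hx]
  have hquad : α ^ 2 * b * d * x ^ 2 ≤ (1 + α * b * x) * (1 + α * d * x) := by
    nlinarith [mul_nonneg (mul_nonneg hα.le hb.le) hx, mul_nonneg (mul_nonneg hα.le hd.le) hx]
  have hcoef : 0 ≤ -c * β ^ 2 / (α * b * d) :=
    div_nonneg (mul_nonneg (neg_nonneg.2 hc) (sq_nonneg β)) (by positivity)
  calc β ^ 2 * x * (1 - α * c * x)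
      = β ^ 2 / (α * b) * (α * b * x) + -c * β ^ 2 / (α * b * d) * (α ^ 2 * b * d * x ^ 2) := by
        field_simp; ring
    _ ≤ β ^ 2 / (α * b) * ((1 + α * b * x) * (1 + α * d * x)) +
          -c * β ^ 2 / (α * b * d) * ((1 + α * b * x) * (1 + α * d * x)) := by
        gcongr
    _ = _ := by ring

lemma exists_mul_weight_le_delta {α b c d : ℝ} (hα : 0 < α) (hb : 0 < b) (hd : 0 < d)
    (hc : c ≤ 0) (β : ℝ) :
    ∃ R > 0, ∃ ε > 0, ∀ p q : ℝ, R ≤ q ^ 2 → ε * weight p q ≤ delta α β b c d p q := by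
  set C₀ := β ^ 2 / (α * b) + -c * β ^ 2 / (α * b * d)
  have hC₀ : 0 ≤ C₀ := add_nonneg (by positivity)
    (div_nonneg (mul_nonneg (neg_nonneg.2 hc) (sq_nonneg β)) (by positivity))
  refine ⟨2 * C₀ + 1, by positivity, min 1 (α * b) * min 1 (α * d) / 2, by positivity, ?_⟩
  intro p q hq
  have hx := sq_nonneg p
  have hprod : min 1 (α * b) * min 1 (α * d) * (1 + p ^ 2) ^ 2 ≤
      (1 + α * b * p ^ 2) * (1 + α * d * p ^ 2) := by
    rw [sq, mul_mul_mul_comm]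
    exact mul_le_mul (min_one_mul_one_add_le hx) (min_one_mul_one_add_le hx)
      (by positivity) (by positivity)
  have hβterm := sq_mul_one_sub_le_mul_prod hα hb hd hc β hx
  calc min 1 (α * b) * min 1 (α * d) / 2 * weight p q
      = (1 + q ^ 2) / 2 * (min 1 (α * b) * min 1 (α * d) * (1 + p ^ 2) ^ 2) := by
        unfold weight; ring
    _ ≤ (q ^ 2 - C₀) * ((1 + α * b * p ^ 2) * (1 + α * d * p ^ 2)) :=
        mul_le_mul (by linarith) hprod (by positivity) (by linarith)
    _ ≤ delta α β b c d p q := by unfold delta; linarith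

lemma exists_mul_weight_le_abs_delta_of_small_q {α b d : ℝ} (hα : 0 < α) (hb : 0 ≤ b)
    (hd : 0 ≤ d) (β c : ℝ) {R δ : ℝ} (hδ : 0 < δ) :
    ∃ X₀, ∀ p q : ℝ, q ^ 2 < R → δ ≤ |α * b * d * q ^ 2 + β ^ 2 * c| → X₀ ≤ p ^ 2 →
      α * δ / (8 * (1 + R)) * weight p q ≤ |delta α β b c d p q| := by
  set K := α * (b + d) * R + β ^ 2 + R
  refine ⟨max 1 (2 * K / (α * δ)), fun p q hq hδq hp => ?_⟩
  have hR : 0 < 1 + R := by linarith [sq_nonneg q]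
  have hp1 : 1 ≤ p ^ 2 := le_of_max_le_left hp
  have hm : α * δ ≤ |α * (α * b * d * q ^ 2 + β ^ 2 * c)| := by
    rw [abs_mul, abs_of_pos hα]; gcongr
  have hK : |α * (b + d) * q ^ 2 - β ^ 2| + |q ^ 2| ≤ K := by
    have hbd : 0 ≤ α * (b + d) := by positivity
    have hsub := abs_sub (α * (b + d) * q ^ 2) (β ^ 2)
    rw [abs_of_nonneg (mul_nonneg hbd (sq_nonneg q)), abs_of_nonneg (sq_nonneg β)] at hsub
    rw [abs_of_nonneg (sq_nonneg q)]
    nlinarith [mul_le_mul_of_nonneg_left hq.le hbd]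
  have hxK : 2 * K ≤ α * δ * p ^ 2 := by
    rw [← div_le_iff₀' (by positivity)]; exact le_of_max_le_right hp
  have hweight : weight p q ≤ 4 * (1 + R) * (p ^ 2) ^ 2 := by
    unfold weight
    calc (1 + q ^ 2) * (1 + p ^ 2) ^ 2 ≤ (1 + R) * (2 * p ^ 2) ^ 2 := by
          gcongr; linarith
      _ = 4 * (1 + R) * (p ^ 2) ^ 2 := by ring
  calc α * δ / (8 * (1 + R)) * weight p q
      ≤ α * δ / (8 * (1 + R)) * (4 * (1 + R) * (p ^ 2) ^ 2) := by gcongr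
    _ = α * δ / 2 * (p ^ 2) ^ 2 := by field_simp; ring
    _ ≤ |delta α β b c d p q| := by
        rw [delta_eq_quadratic]; exact half_mul_sq_le_abs_quadratic hm hK hp1 hxK

lemma exists_eventually_mul_weight_le_abs_delta {α β b c d : ℝ} (hα : 0 < α) (hb : 0 < b)
    (hd : 0 < d) (hc : c < 0) (hnd : ∀ q : ℤ, α * b * d * (q : ℝ) ^ 2 ≠ -(β ^ 2 * c)) :
    ∃ ε > 0, ∀ᶠ x : ℕ × ℤ in cofinite,
      ε * weight x.1 x.2 ≤ |delta α β b c d x.1 x.2| := by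
  obtain ⟨R, hR, ε, hε, hlarge⟩ := exists_mul_weight_le_delta hα hb hd hc.le β
  have hfin : {q : ℤ | (q : ℝ) ^ 2 < R}.Finite := by
    simpa only [eventually_cofinite, not_le] using eventually_le_intCast_sq R
  obtain ⟨δ, hδ, hδle⟩ := exists_pos_le_abs_of_finite hfin
    (f := fun q => α * b * d * (q : ℝ) ^ 2 + β ^ 2 * c)
    (fun q _ h => hnd q (eq_neg_of_add_eq_zero_left h))
  obtain ⟨X₀, hsmall⟩ :=
    exists_mul_weight_le_abs_delta_of_small_q hα hb.le hd.le β c (R := R) hδ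
  refine ⟨min ε (α * δ / (8 * (1 + R))), by positivity, ?_⟩
  have hcover : ∀ᶠ x : ℕ × ℤ in cofinite, X₀ ≤ (x.1 : ℝ) ^ 2 ∨ R ≤ (x.2 : ℝ) ^ 2 := by
    rw [← coprod_cofinite]
    exact eventually_sup.2 ⟨((eventually_le_natCast_sq X₀).comap Prod.fst).mono fun _ => Or.inl,
      ((eventually_le_intCast_sq R).comap Prod.snd).mono fun _ => Or.inr⟩
  filter_upwards [hcover] with ⟨p, q⟩ hpq
  have hw := weight_nonneg (p : ℝ) q
  rcases le_or_gt R ((q : ℝ) ^ 2) with hq | hq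
  · exact (mul_le_mul_of_nonneg_right (min_le_left _ _) hw).trans
      ((hlarge p q hq).trans (le_abs_self _))
  · exact (mul_le_mul_of_nonneg_right (min_le_right _ _) hw).trans
      (hsmall p q hq (hδle q hq) (hpq.resolve_right hq.not_ge))

lemma numeratorA_le_mul_weight {α β c d : ℝ} (hα : 0 ≤ α) (hβ : 0 ≤ β) (hc : c ≤ 0)
    (hd : 0 ≤ d) (p q : ℝ) :
    p * |q| * (1 + α * d * p ^ 2) + β * p ^ 2 * (1 - α * c * p ^ 2) ≤
      (1 + α * d + β * (1 - α * c)) * weight p q := by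
  have h₁ := mul_abs_mul_le_weight (mul_nonneg hα hd) p q
  have h₂ := mul_le_mul_of_nonneg_left
    (sq_mul_le_weight (neg_nonneg.2 (mul_nonpos_of_nonneg_of_nonpos hα hc)) p q) hβ
  linarith

lemma numeratorB_le_mul_weight {α β b : ℝ} (hα : 0 ≤ α) (hβ : 0 ≤ β) (hb : 0 ≤ b) (p q : ℝ) :
    β * p ^ 2 + p * |q| * (1 + α * b * p ^ 2) ≤ (β + (1 + α * b)) * weight p q := by
  have h₁ : p ^ 2 ≤ weight p q := by simpa using sq_mul_le_weight le_rfl p q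
  have h₂ := mul_abs_mul_le_weight (mul_nonneg hα hb) p q
  nlinarith

end AbcdSystem

/-- Uniform bound for the quantities `A(p,q)` and `B(p,q)` for the abcd-system with
`a = 0`, `b > 0`, `c < 0`, `d > 0`, on the noncritical modes. -/
theorem abcd_AB_bound (α β b c d : ℝ) (hα : 0 < α) (hβ : 0 < β)
    (hb : 0 < b) (hd : 0 < d) (hc : c < 0)
    (hnd : ∀ q : ℤ, α * b * d * (q : ℝ) ^ 2 ≠ -(β ^ 2 * c)) :
    ∃ M : ℝ, 0 < M ∧ ∀ p : ℕ, ∀ q : ℤ, (p, q) ≠ (0, 0) →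
      (q : ℝ) ^ 2 * (1 + α * b * (p : ℝ) ^ 2) * (1 + α * d * (p : ℝ) ^ 2) +
          β ^ 2 * (p : ℝ) ^ 2 * (α * c * (p : ℝ) ^ 2 - 1) ≠ 0 →
      ((p : ℝ) * |(q : ℝ)| * (1 + α * d * (p : ℝ) ^ 2) +
          β * (p : ℝ) ^ 2 * (1 - α * c * (p : ℝ) ^ 2)) /
        |(q : ℝ) ^ 2 * (1 + α * b * (p : ℝ) ^ 2) * (1 + α * d * (p : ℝ) ^ 2) +
          β ^ 2 * (p : ℝ) ^ 2 * (α * c * (p : ℝ) ^ 2 - 1)| ≤ M ∧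
      (β * (p : ℝ) ^ 2 + (p : ℝ) * |(q : ℝ)| * (1 + α * b * (p : ℝ) ^ 2)) /
        |(q : ℝ) ^ 2 * (1 + α * b * (p : ℝ) ^ 2) * (1 + α * d * (p : ℝ) ^ 2) +
          β ^ 2 * (p : ℝ) ^ 2 * (α * c * (p : ℝ) ^ 2 - 1)| ≤ M := by
  obtain ⟨ε, hε, hΔ⟩ := AbcdSystem.exists_eventually_mul_weight_le_abs_delta hα hb hd hc hnd
  have hαc : 0 < 1 - α * c := by nlinarith
  obtain ⟨MA, hMA⟩ := bddAbove_range_div_abs (by positivity) hε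
    (g := fun x : ℕ × ℤ => AbcdSystem.delta α β b c d x.1 x.2)
    (fun x => AbcdSystem.numeratorA_le_mul_weight hα.le hβ.le hc.le hd.le x.1 x.2) hΔ
  obtain ⟨MB, hMB⟩ := bddAbove_range_div_abs (by positivity) hε
    (g := fun x : ℕ × ℤ => AbcdSystem.delta α β b c d x.1 x.2)
    (fun x => AbcdSystem.numeratorB_le_mul_weight hα.le hβ.le hb.le x.1 x.2) hΔ
  refine ⟨max (max MA MB) 1, by positivity, fun p q _ _ => ⟨?_, ?_⟩⟩
  · exact (hMA ⟨(p, q), rfl⟩).trans ((le_max_left _ _).trans (le_max_left _ _))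
  · exact (hMB ⟨(p, q), rfl⟩).trans ((le_max_right _ _).trans (le_max_left _ _))
end
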